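/- arXiv:2511.22750 — 10 statements merged into one kernel-verified Lean document; each statement's English description precedes it below -/
import Mathlib

section
/- If the triples (a, b, c) and (a', b', c') of positive integers are both index-realizable, then the triple (a·a', b·b', c·c') is index-realizable. -/
/-- A triple `(a, b, c)` of positive integers is index-realizable if there exists a group `G`
with finite-index subgroups `H` and `K` such that `a = [G : H]`, `b = [G : K]`, and
`c = [G : H ∩ K]`. -/
def IndexRealizable (a b c : ℕ) : Prop :=
  ∃ (G : Type) (_ : Group G) (H K : Subgroup G),
    H.index ≠ 0 ∧ K.index ≠ 0 ∧ H.index = a ∧ K.index = b ∧ (H ⊓ K).index = c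

theorem indexRealizable_mul (a b c a' b' c' : ℕ)
    (ha : 0 < a) (hb : 0 < b) (hc : 0 < c) (ha' : 0 < a') (hb' : 0 < b') (hc' : 0 < c')
    (h : IndexRealizable a b c) (h' : IndexRealizable a' b' c') :
    IndexRealizable (a * a') (b * b') (c * c') := by
  obtain ⟨G, _, H, K, hH, hK, rfl, rfl, rfl⟩ := h
  obtain ⟨G', _, H', K', hH', hK', rfl, rfl, rfl⟩ := h'
  refine ⟨G × G', inferInstance, H.prod H', K.prod K', ?_, ?_, ?_, ?_, ?_⟩
  · rw [Subgroup.index_prod]; exact mul_ne_zero hH hH'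
  · rw [Subgroup.index_prod]; exact mul_ne_zero hK hK'
  · exact Subgroup.index_prod H H'
  · exact Subgroup.index_prod K K'
  · have : H.prod H' ⊓ K.prod K' = (H ⊓ K).prod (H' ⊓ K') := by
      ext x; simp [Subgroup.mem_prod, and_assoc, and_left_comm]
    rw [this, Subgroup.index_prod]
end

section
/- If (a, b, c) is a triple of positive integers such that lcm(a, b) divides c and c divides a·b, then (a, b, c) is index-realizable. -/
theorem indexRealizable_of_lcm_dvd_of_dvd_mul (a b c : ℕ) (ha : 0 < a) (hb : 0 < b) (hc : 0 < c)
    (h₁ : Nat.lcm a b ∣ c) (h₂ : c ∣ a * b) : IndexRealizable a b c := by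
  obtain ⟨m, hm⟩ : a ∣ c := (Nat.dvd_lcm_left a b).trans h₁
  obtain ⟨n, hn⟩ : b ∣ c := (Nat.dvd_lcm_right a b).trans h₁
  obtain ⟨k, hk⟩ := h₂
  have hm0 : m ≠ 0 := by rintro rfl; omega
  have hn0 : n ≠ 0 := by rintro rfl; omega
  have hk0 : k ≠ 0 := by rintro rfl; simp_all; omega
  have hcmnk' : c = m * n * k := by
    have h : c * c = (m * n * k) * c := by
      calc c * c = (a * m) * (b * n) := by rw [← hm, ← hn]
      _ = (m * n) * (a * b) := by ring
      _ = (m * n) * (c * k) := by rw [hk]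
      _ = (m * n * k) * c := by ring
    exact Nat.eq_of_mul_eq_mul_right hc h
  have hank : a = n * k := by
    have : a * m = m * (n * k) := by rw [← hm]; rw [hcmnk']; ring
    have := Nat.eq_of_mul_eq_mul_left (Nat.pos_of_ne_zero hm0) (by linarith [this] : m * a = m * (n * k))
    exact this
  have hbmk : b = m * k := by
    have h : n * b = n * (m * k) := by
      have : b * n = m * n * k := by rw [← hn, hcmnk']
      linarith [this]
    exact Nat.eq_of_mul_eq_mul_left (Nat.pos_of_ne_zero hn0) h
  haveI : NeZero m := ⟨hm0⟩
  haveI : NeZero n := ⟨hn0⟩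
  haveI : NeZero k := ⟨hk0⟩
  refine ⟨Multiplicative (ZMod m) × Multiplicative (ZMod n) × Multiplicative (ZMod k),
    inferInstance,
    (⊤ : Subgroup (Multiplicative (ZMod m))).prod
      (⊥ : Subgroup (Multiplicative (ZMod n) × Multiplicative (ZMod k))),
    (⊥ : Subgroup (Multiplicative (ZMod m))).prod
      ((⊤ : Subgroup (Multiplicative (ZMod n))).prod
        (⊥ : Subgroup (Multiplicative (ZMod k)))), ?_, ?_, ?_, ?_, ?_⟩
  · rw [Subgroup.index_prod, Subgroup.index_top, Subgroup.index_bot, Nat.card_prod]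
    simp [Nat.card_zmod, hn0, hk0]
  · rw [Subgroup.index_prod, Subgroup.index_bot, Subgroup.index_prod, Subgroup.index_top,
      Subgroup.index_bot]
    simp [Nat.card_zmod, hm0, hk0]
  · rw [Subgroup.index_prod, Subgroup.index_top, Subgroup.index_bot, Nat.card_prod]
    simp [Nat.card_zmod, hank]
  · rw [Subgroup.index_prod, Subgroup.index_bot, Subgroup.index_prod, Subgroup.index_top,
      Subgroup.index_bot]
    simp [Nat.card_zmod, hbmk]
  · have hinf : ((⊤ : Subgroup (Multiplicative (ZMod m))).prod
      (⊥ : Subgroup (Multiplicative (ZMod n) × Multiplicative (ZMod k))) ⊓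
      (⊥ : Subgroup (Multiplicative (ZMod m))).prod
      ((⊤ : Subgroup (Multiplicative (ZMod n))).prod
        (⊥ : Subgroup (Multiplicative (ZMod k))))) = ⊥ := by
      ext ⟨x, y, z⟩
      simp [Subgroup.mem_prod, Prod.ext_iff]
      tauto
    rw [hinf, Subgroup.index_bot]
    simp [Nat.card_prod, Nat.card_zmod, hcmnk']; ring
end

section
/- For any positive integer n > 1, the triple (n, n, n(n-1)) is index-realizable. -/
section aux

variable {n : ℕ} [NeZero n]

/-- A permutation sending `x₀ ↦ x` and `y₀ ↦ y`, given the relevant distinctness. -/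
lemma exists_perm_map (x₀ y₀ x y : Fin n) (h0 : x₀ ≠ y₀) (h : x ≠ y) :
    ∃ g : Equiv.Perm (Fin n), g x₀ = x ∧ g y₀ = y := by
  classical
  set f1 := Equiv.swap x₀ x with hf1
  set b := f1 y₀ with hb
  have hbx : b ≠ x := by
    intro hc
    have : f1 y₀ = f1 x₀ := by rw [← hb, hc, hf1, Equiv.swap_apply_left]
    exact h0 (f1.injective this).symm
  refine ⟨f1.trans (Equiv.swap b y), ?_, ?_⟩
  · simp only [Equiv.trans_apply, hf1, Equiv.swap_apply_left]
    exact Equiv.swap_apply_of_ne_of_ne hbx.symm h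
  · simp only [Equiv.trans_apply, ← hb, Equiv.swap_apply_left]

lemma orbit_pair (x₀ y₀ : Fin n) (h0 : x₀ ≠ y₀) :
    MulAction.orbit (Equiv.Perm (Fin n)) (x₀, y₀) = {p : Fin n × Fin n | p.1 ≠ p.2} := by
  ext ⟨x, y⟩
  simp only [MulAction.mem_orbit_iff, Set.mem_setOf_eq]
  constructor
  · rintro ⟨g, hg⟩
    have h1 : g • x₀ = x := congrArg Prod.fst hg
    have h2 : g • y₀ = y := congrArg Prod.snd hg
    rw [← h1, ← h2]
    intro hc
    exact h0 (g.injective hc)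
  · intro hxy
    obtain ⟨g, hg1, hg2⟩ := exists_perm_map x₀ y₀ x y h0 hxy
    exact ⟨g, Prod.ext hg1 hg2⟩

/-- The distinct pairs of `Fin n` biject with `Fin n × {b // b ≠ 0}`. -/
def distinctPairsEquiv : {p : Fin n × Fin n // p.1 ≠ p.2} ≃ Fin n × {b : Fin n // b ≠ 0} where
  toFun p := (p.1.1, ⟨p.1.2 - p.1.1, sub_ne_zero.mpr (Ne.symm p.2)⟩)
  invFun q := ⟨(q.1, q.1 + q.2.1), by
    simp only [ne_eq, left_eq_add]
    exact q.2.2⟩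
  left_inv p := by
    ext <;> simp
  right_inv q := by
    ext <;> simp

end aux

theorem indexRealizable_n_n_n_mul_pred (n : ℕ) (hn : 1 < n) :
    IndexRealizable n n (n * (n - 1)) := by
  haveI : NeZero n := ⟨by omega⟩
  classical
  set G := Equiv.Perm (Fin n) with hG
  set x₀ : Fin n := ⟨0, by omega⟩ with hx₀
  set y₀ : Fin n := ⟨1, by omega⟩ with hy₀
  have h01 : x₀ ≠ y₀ := by simp [hx₀, hy₀, Fin.ext_iff]
  haveI : MulAction.IsPretransitive G (Fin n) :=
    ⟨fun x y => ⟨Equiv.swap x y, Equiv.swap_apply_left x y⟩⟩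
  have hidx : ∀ x : Fin n, (MulAction.stabilizer G x).index = n := fun x => by
    rw [MulAction.index_stabilizer_of_transitive, Nat.card_eq_fintype_card, Fintype.card_fin]
  have hinf : MulAction.stabilizer G x₀ ⊓ MulAction.stabilizer G y₀
      = MulAction.stabilizer G (x₀, y₀) := by
    ext g
    simp only [Subgroup.mem_inf, MulAction.mem_stabilizer_iff, Prod.smul_def, Prod.mk.injEq]
  have hcard : (MulAction.stabilizer G (x₀, y₀)).index = n * (n - 1) := by
    rw [MulAction.index_stabilizer, orbit_pair x₀ y₀ h01, ← Nat.card_coe_set_eq]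
    have : Nat.card {p : Fin n × Fin n | p.1 ≠ p.2} = Nat.card (Fin n × {b : Fin n // b ≠ 0}) :=
      Nat.card_congr distinctPairsEquiv
    rw [this, Nat.card_prod, Nat.card_eq_fintype_card, Nat.card_eq_fintype_card,
      Fintype.card_fin]
    congr 1
    rw [Fintype.card_subtype_compl, Fintype.card_subtype_eq, Fintype.card_fin]
  refine ⟨G, inferInstance, MulAction.stabilizer G x₀, MulAction.stabilizer G y₀,
    ?_, ?_, hidx x₀, hidx y₀, ?_⟩
  · rw [hidx]; omega
  · rw [hidx]; omega
  · rw [hinf, hcard]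
end

section
/- For any positive integer n and any prime p dividing φ(n) (where φ is Euler's totient function), the triple (n, n, n·p) is index-realizable. -/
open Subgroup SemidirectProduct

theorem indexRealizable_n_n_np_of_dvd_totient (n p : ℕ) (hn : 0 < n) (hp : p.Prime)
    (hdvd : p ∣ Nat.totient n) : IndexRealizable n n (n * p) := by
  haveI : NeZero n := ⟨hn.ne'⟩
  haveI : Fact p.Prime := ⟨hp⟩
  have hcard : Nat.card (ZMod n)ˣ = Nat.totient n := by
    rw [Nat.card_eq_fintype_card, ZMod.card_units_eq_totient]
  obtain ⟨u, hu⟩ := exists_prime_orderOf_dvd_card' (G := (ZMod n)ˣ) p (by rw [hcard]; exact hdvd)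
  -- the action of units on `Multiplicative (ZMod n)`
  let act : (ZMod n)ˣ →* MulAut (Multiplicative (ZMod n)) :=
    { toFun := fun w => AddEquiv.toMultiplicative (DistribMulAction.toAddAut (ZMod n)ˣ (ZMod n) w)
      map_one' := by ext x; simp
      map_mul' := fun w₁ w₂ => by ext x; simp [mul_smul] }
  let P : Subgroup (ZMod n)ˣ := Subgroup.zpowers u
  let φ : P →* MulAut (Multiplicative (ZMod n)) := act.comp P.subtype
  have hP : Nat.card P = p := by rw [Nat.card_zpowers, hu]
  have hG : Nat.card (Multiplicative (ZMod n) ⋊[φ] P) = n * p := by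
    have e : (Multiplicative (ZMod n) ⋊[φ] P) ≃ Multiplicative (ZMod n) × P :=
      ⟨fun x => (x.left, x.right), fun x => ⟨x.1, x.2⟩, fun _ => rfl, fun _ => rfl⟩
    rw [Nat.card_congr e, Nat.card_prod, Nat.card_congr Multiplicative.toAdd,
      Nat.card_zmod, hP]
  let H : Subgroup (Multiplicative (ZMod n) ⋊[φ] P) := (inr : P →* Multiplicative (ZMod n) ⋊[φ] P).range
  have hHcard : Nat.card H = p := by
    rw [Nat.card_congr (MonoidHom.ofInjective (inr_injective (φ := φ))).toEquiv.symm, hP]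
  have hHindex : H.index = n := by
    have := Subgroup.card_mul_index H
    rw [hHcard, hG] at this
    have hp0 : p ≠ 0 := hp.ne_zero
    exact Nat.eq_of_mul_eq_mul_left hp.pos (by rw [this, Nat.mul_comm])
  let c : Multiplicative (ZMod n) ⋊[φ] P := inl (Multiplicative.ofAdd (1 : ZMod n))
  let e : (Multiplicative (ZMod n) ⋊[φ] P) ≃* (Multiplicative (ZMod n) ⋊[φ] P) := MulAut.conj c
  let K : Subgroup (Multiplicative (ZMod n) ⋊[φ] P) := H.map e.toMonoidHom
  have hKindex : K.index = n := by
    rw [Subgroup.index_map_eq _ e.surjective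
      (by rw [(MonoidHom.ker_eq_bot_iff _).mpr e.injective]; exact bot_le), hHindex]
  have hinf : H ⊓ K = ⊥ := by
    refine le_antisymm (fun x hx => ?_) bot_le
    obtain ⟨⟨w, hw⟩, hxK⟩ := hx
    obtain ⟨y, hy, hyx⟩ := hxK
    obtain ⟨v, hv⟩ := hy
    -- x = c * y * c⁻¹ with y = inr v
    have hyv : y = inr v := hv.symm
    have hx1 : x.left = 1 := by rw [← hw]; rfl
    have hxc : x = c * inr v * c⁻¹ := by
      rw [← hyx, hyv]; rfl
    have hleft : x.left = Multiplicative.ofAdd (1 : ZMod n) *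
        φ v (Multiplicative.ofAdd (1 : ZMod n))⁻¹ := by
      rw [hxc]
      simp only [c, mul_left, mul_right, inv_left, inv_right, left_inl, right_inl, left_inr,
        right_inr, map_one, map_inv, MulAut.one_apply, one_mul, mul_one, inv_one]
    have hfix : φ v (Multiplicative.ofAdd (1 : ZMod n)) = Multiplicative.ofAdd (1 : ZMod n) := by
      have h1 : Multiplicative.ofAdd (1 : ZMod n) *
          φ v (Multiplicative.ofAdd (1 : ZMod n))⁻¹ = 1 := by rw [← hleft, hx1]
      rw [map_inv] at h1
      have := (mul_inv_eq_one.mp h1).symm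
      exact this
    -- φ v (ofAdd 1) = ofAdd (↑v * 1) = ofAdd ↑v
    have hval : ((v : (ZMod n)ˣ) : ZMod n) = 1 := by
      have : Multiplicative.toAdd (φ v (Multiplicative.ofAdd (1 : ZMod n))) =
          ((v : (ZMod n)ˣ) : ZMod n) := by
        show (v : (ZMod n)ˣ) • (1 : ZMod n) = _
        simp [Units.smul_def]
      rw [hfix] at this
      simpa using this.symm
    have hv1 : v = 1 := by
      have h2 : (v : (ZMod n)ˣ) = 1 := Units.ext (by simpa using hval)
      exact_mod_cast h2
    have hy1 : y = 1 := by rw [hyv, hv1, map_one]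
    rw [← hyx, hy1]
    simp
  have hinfindex : (H ⊓ K).index = n * p := by
    rw [hinf, Subgroup.index_bot, hG]
  exact ⟨Multiplicative (ZMod n) ⋊[φ] P, inferInstance, H, K, by rw [hHindex]; exact hn.ne',
    by rw [hKindex]; exact hn.ne', hHindex, hKindex, hinfindex⟩
end

section
/- A triple (a, b, c) of positive integers is index-realizable if and only if there exist finite sets η of cardinality a and κ of cardinality b, together with a set of edges E ⊆ η × κ of cardinality c, such that: (1) every element of η and every element of κ lies in at least one edge, and (2) the group of pairs of permutations (σ, τ) ∈ Sym(η) × Sym(κ) satisfying (σ(h), τ(k)) ∈ E ⇔ (h, k) ∈ E acts transitively on E. -/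
lemma smul_mem_orbit_iff' {G α : Type*} [Group G] [MulAction G α] (g : G) (x b : α) :
    g • x ∈ MulAction.orbit G b ↔ x ∈ MulAction.orbit G b := by
  constructor
  · rintro ⟨g', hg'⟩
    refine ⟨g⁻¹ * g', ?_⟩
    show (g⁻¹ * g') • b = x
    have hg'' : g' • b = g • x := hg'
    rw [mul_smul, hg'', inv_smul_smul]
  · rintro ⟨g', hg'⟩
    refine ⟨g * g', ?_⟩
    show (g * g') • b = g • x
    have hg'' : g' • b = x := hg'
    rw [mul_smul, hg'']

lemma stabilizer_prod_eq {G α β : Type*} [Group G] [MulAction G α] [MulAction G β]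
    (x : α) (y : β) :
    MulAction.stabilizer G (x, y) = MulAction.stabilizer G x ⊓ MulAction.stabilizer G y := by
  ext g
  simp [MulAction.mem_stabilizer_iff, Prod.ext_iff]

section Aut

variable {η κ : Type} (E : Set (η × κ))

/-- The automorphism group of a bipartite graph. -/
def autGroup : Subgroup (Equiv.Perm η × Equiv.Perm κ) where
  carrier := {p | ∀ h k, (p.1 h, p.2 k) ∈ E ↔ (h, k) ∈ E}
  one_mem' := by intro h k; simp
  mul_mem' := by
    intro p q hp hq h k
    exact (hp (q.1 h) (q.2 k)).trans (hq h k)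
  inv_mem' := by
    intro p hp h k
    have := hp (p.1⁻¹ h) (p.2⁻¹ k)
    simpa using this.symm

instance autSMulLeft : SMul ↥(autGroup E) η := ⟨fun p h => p.1.1 h⟩
instance autSMulRight : SMul ↥(autGroup E) κ := ⟨fun p k => p.1.2 k⟩

instance autActLeft : MulAction ↥(autGroup E) η where
  one_smul _ := rfl
  mul_smul _ _ _ := rfl

instance autActRight : MulAction ↥(autGroup E) κ where
  one_smul _ := rfl
  mul_smul _ _ _ := rfl

lemma aut_smul_pair (p : ↥(autGroup E)) (e : η × κ) :
    p • e = (p.1.1 e.1, p.1.2 e.2) := rfl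

end Aut

theorem indexRealizable_iff_graph (a b c : ℕ) (ha : 0 < a) (hb : 0 < b) (hc : 0 < c) :
    IndexRealizable a b c ↔
      ∃ (η κ : Type) (_ : Fintype η) (_ : Fintype κ) (E : Set (η × κ)),
        Nat.card η = a ∧ Nat.card κ = b ∧ Nat.card E = c ∧
        (∀ h : η, ∃ k : κ, (h, k) ∈ E) ∧
        (∀ k : κ, ∃ h : η, (h, k) ∈ E) ∧
        (∀ e₁ ∈ E, ∀ e₂ ∈ E, ∃ (σ : Equiv.Perm η) (τ : Equiv.Perm κ),
          (∀ (h : η) (k : κ), (σ h, τ k) ∈ E ↔ (h, k) ∈ E) ∧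
          (σ e₁.1, τ e₁.2) = e₂) := by
  constructor
  · rintro ⟨G, _, H, K, hH, hK, hHa, hKb, hHKc⟩
    haveI : H.FiniteIndex := ⟨hH⟩
    haveI : K.FiniteIndex := ⟨hK⟩
    haveI : Finite (G ⧸ H) := Nat.finite_of_card_ne_zero (by rwa [← Subgroup.index])
    haveI : Finite (G ⧸ K) := Nat.finite_of_card_ne_zero (by rwa [← Subgroup.index])
    refine ⟨G ⧸ H, G ⧸ K, Fintype.ofFinite _, Fintype.ofFinite _,
      MulAction.orbit G (((1 : G) : G ⧸ H), ((1 : G) : G ⧸ K)), ?_, ?_, ?_, ?_, ?_, ?_⟩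
    · rw [← hHa, Subgroup.index]
    · rw [← hKb, Subgroup.index]
    · rw [Nat.card_coe_set_eq, ← MulAction.index_stabilizer, stabilizer_prod_eq,
        MulAction.stabilizer_quotient, MulAction.stabilizer_quotient, hHKc]
    · intro h
      obtain ⟨g, rfl⟩ := QuotientGroup.mk_surjective h
      refine ⟨g • ((1 : G) : G ⧸ K), ?_⟩
      have : ((g : G ⧸ H), g • ((1 : G) : G ⧸ K)) = g • (((1 : G) : G ⧸ H), ((1 : G) : G ⧸ K)) := by
        have : g • (((1 : G) : G ⧸ H)) = (g : G ⧸ H) := by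
          show ((g * 1 : G) : G ⧸ H) = _
          rw [mul_one]
        rw [Prod.smul_mk, this]
      rw [this]
      exact MulAction.mem_orbit _ g
    · intro k
      obtain ⟨g, rfl⟩ := QuotientGroup.mk_surjective k
      refine ⟨g • ((1 : G) : G ⧸ H), ?_⟩
      have : (g • ((1 : G) : G ⧸ H), (g : G ⧸ K)) = g • (((1 : G) : G ⧸ H), ((1 : G) : G ⧸ K)) := by
        have : g • (((1 : G) : G ⧸ K)) = (g : G ⧸ K) := by
          show ((g * 1 : G) : G ⧸ K) = _
          rw [mul_one]
        rw [Prod.smul_mk, this]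
      rw [this]
      exact MulAction.mem_orbit _ g
    · rintro e₁ ⟨g₁, rfl⟩ e₂ ⟨g₂, rfl⟩
      refine ⟨MulAction.toPerm (g₂ * g₁⁻¹), MulAction.toPerm (g₂ * g₁⁻¹), fun h k => ?_, ?_⟩
      · exact smul_mem_orbit_iff' (g₂ * g₁⁻¹) (h, k) _
      · show (g₂ * g₁⁻¹) • g₁ • (((1 : G) : G ⧸ H), ((1 : G) : G ⧸ K)) = _
        rw [← mul_smul, inv_mul_cancel_right]
  · rintro ⟨η, κ, _, _, E, hη, hκ, hE, hleft, hright, htrans⟩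
    haveI : Nonempty η := by
      have : 0 < Nat.card η := hη ▸ ha
      exact (Nat.card_pos_iff.mp this).1
    obtain ⟨h₀⟩ := ‹Nonempty η›
    obtain ⟨k₀, he₀⟩ := hleft h₀
    have orbitH : MulAction.orbit ↥(autGroup E) h₀ = Set.univ := by
      ext h
      simp only [Set.mem_univ, iff_true]
      obtain ⟨k, hk⟩ := hleft h
      obtain ⟨σ, τ, hpres, heq⟩ := htrans (h₀, k₀) he₀ (h, k) hk
      exact ⟨⟨(σ, τ), hpres⟩, congrArg Prod.fst heq⟩
    have orbitK : MulAction.orbit ↥(autGroup E) k₀ = Set.univ := by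
      ext k
      simp only [Set.mem_univ, iff_true]
      obtain ⟨h, hk⟩ := hright k
      obtain ⟨σ, τ, hpres, heq⟩ := htrans (h₀, k₀) he₀ (h, k) hk
      exact ⟨⟨(σ, τ), hpres⟩, congrArg Prod.snd heq⟩
    have orbitE : MulAction.orbit ↥(autGroup E) (h₀, k₀) = E := by
      apply Set.eq_of_subset_of_subset
      · rintro e ⟨g, rfl⟩
        show (g.1.1 h₀, g.1.2 k₀) ∈ E
        exact (g.2 h₀ k₀).mpr he₀
      · intro e he
        obtain ⟨σ, τ, hpres, heq⟩ := htrans (h₀, k₀) he₀ e he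
        exact ⟨⟨(σ, τ), hpres⟩, heq⟩
    have hHa : (MulAction.stabilizer ↥(autGroup E) h₀).index = a := by
      rw [MulAction.index_stabilizer, orbitH, Set.ncard_univ, hη]
    have hKb : (MulAction.stabilizer ↥(autGroup E) k₀).index = b := by
      rw [MulAction.index_stabilizer, orbitK, Set.ncard_univ, hκ]
    have hHKc : (MulAction.stabilizer ↥(autGroup E) h₀ ⊓
        MulAction.stabilizer ↥(autGroup E) k₀).index = c := by
      rw [← stabilizer_prod_eq, MulAction.index_stabilizer, orbitE,
        ← Nat.card_coe_set_eq, hE]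
    exact ⟨↥(autGroup E), inferInstance, MulAction.stabilizer _ h₀, MulAction.stabilizer _ k₀,
      hHa ▸ ha.ne', hKb ▸ hb.ne', hHa, hKb, hHKc⟩
end

section
/- Let n > 2 be a positive integer. The triple (n, n, n(n-2)) is not index-realizable if and only if n is odd and n ≠ 3. -/
open MulAction Pointwise

lemma even_card_aux {G X Z : Type} [Group G] [MulAction G X] [MulAction G Z] [Finite X]
    (f : X → Set Z) (hf : ∀ (g : G) (x : X), f (g • x) = g • f x)
    (x0 : X) (htrans : ∀ x : X, ∃ g : G, g • x0 = x)
    (h2 : {x | f x = f x0}.ncard = 2) : Even (Nat.card X) := by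
  classical
  cases nonempty_fintype X
  have hfib : ∀ x : X, {x' | f x' = f x}.ncard = 2 := by
    intro x
    obtain ⟨g, rfl⟩ := htrans x
    have hset : {x' | f x' = f (g • x0)} = g • {x' | f x' = f x0} := by
      ext x'
      simp only [Set.mem_setOf_eq, Set.mem_smul_set_iff_inv_smul_mem]
      rw [hf g x0, ← inv_smul_eq_iff, ← hf g⁻¹ x']
    rw [hset, ← Set.image_smul, Set.ncard_image_of_injective _ (MulAction.injective g), h2]
  rw [Nat.card_eq_fintype_card, ← Finset.card_univ,
    Finset.card_eq_sum_card_fiberwise (f := f) (t := Finset.univ.image f)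
      (fun x _ => Finset.mem_image_of_mem f (Finset.mem_univ x))]
  have hcount : ∀ y ∈ Finset.univ.image f, (Finset.univ.filter fun x => f x = y).card = 2 := by
    intro y hy
    obtain ⟨x, -, rfl⟩ := Finset.mem_image.mp hy
    have h := hfib x
    rw [← h, Set.ncard_eq_toFinset_card', Set.toFinset_setOf]
  rw [Finset.sum_congr rfl hcount, Finset.sum_const, smul_eq_mul]
  exact even_two.mul_left _

lemma pair_extract {X : Type} {s : Set X} {x : X} (h2 : s.ncard = 2) (hx : x ∈ s) :
    ∃ y, y ≠ x ∧ s = {x, y} := by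
  obtain ⟨a, b, hab, rfl⟩ := Set.ncard_eq_two.mp h2
  rcases Set.mem_insert_iff.mp hx with h | h
  · subst h
    exact ⟨b, hab.symm, rfl⟩
  · rw [Set.mem_singleton_iff] at h
    subst h
    exact ⟨a, hab, Set.pair_comm a x⟩

lemma not_realizable_odd {n : ℕ} (h5 : 5 ≤ n) (hodd : Odd n) :
    ¬ IndexRealizable n n (n * (n - 2)) := by
  rintro ⟨G, _, H, K, hH0, hK0, hHidx, hKidx, hHKidx⟩
  classical
  have hn0 : 0 < n := by omega
  have hfinA : Finite (G ⧸ H) := by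
    refine (Nat.card_ne_zero.mp ?_).2
    rw [← Subgroup.index_eq_card, hHidx]; omega
  have hfinB : Finite (G ⧸ K) := by
    refine (Nat.card_ne_zero.mp ?_).2
    rw [← Subgroup.index_eq_card, hKidx]; omega
  set a0 : G ⧸ H := ((1 : G) : G ⧸ H) with ha0
  set b0 : G ⧸ K := ((1 : G) : G ⧸ K) with hb0
  set O : Set ((G ⧸ H) × (G ⧸ K)) := MulAction.orbit G (a0, b0) with hO
  have hstabA : stabilizer G a0 = H := MulAction.stabilizer_quotient H
  have hstabB : stabilizer G b0 = K := MulAction.stabilizer_quotient K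
  have htransA : ∀ a : G ⧸ H, ∃ g : G, g • a0 = a := by
    intro a
    induction a using QuotientGroup.induction_on with
    | H x => exact ⟨x, by rw [ha0, MulAction.Quotient.smul_mk, smul_eq_mul, mul_one]⟩
  have htransB : ∀ b : G ⧸ K, ∃ g : G, g • b0 = b := by
    intro b
    induction b using QuotientGroup.induction_on with
    | H x => exact ⟨x, by rw [hb0, MulAction.Quotient.smul_mk, smul_eq_mul, mul_one]⟩
  have hOmem : (a0, b0) ∈ O := mem_orbit_self _
  have hOsmul : ∀ (g : G) (x : (G ⧸ H) × (G ⧸ K)), x ∈ O → g • x ∈ O := by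
    intro g x hx
    rw [hO, mem_orbit_iff] at hx ⊢
    obtain ⟨k, hk⟩ := hx
    exact ⟨g * k, by rw [mul_smul, hk]⟩
  have hpair : ∀ (g : G) (a : G ⧸ H) (b : G ⧸ K), ((g • a, g • b) ∈ O ↔ (a, b) ∈ O) := by
    intro g a b
    constructor
    · intro hmem
      have := hOsmul g⁻¹ _ hmem
      rwa [Prod.smul_mk, inv_smul_smul, inv_smul_smul] at this
    · intro hmem
      have := hOsmul g _ hmem
      rwa [Prod.smul_mk] at this
  -- fiber cardinalities
  have hrelH : (H ⊓ K).relIndex H = n - 2 := by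
    have h := Subgroup.relIndex_mul_index (inf_le_left : H ⊓ K ≤ H)
    rw [hHidx, hHKidx, mul_comm n (n - 2)] at h
    exact Nat.eq_of_mul_eq_mul_right hn0 h
  have hrelK : (H ⊓ K).relIndex K = n - 2 := by
    have h := Subgroup.relIndex_mul_index (inf_le_right : H ⊓ K ≤ K)
    rw [hKidx, hHKidx, mul_comm n (n - 2)] at h
    exact Nat.eq_of_mul_eq_mul_right hn0 h
  have hsendB : ∀ (a : G ⧸ H) (b b' : G ⧸ K), (a, b) ∈ O → (a, b') ∈ O →
      ∃ g : G, g • a = a ∧ g • b = b' := by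
    intro a b b' h1 h2
    rw [hO, mem_orbit_iff] at h1 h2
    obtain ⟨g1, hg1⟩ := h1
    obtain ⟨g2, hg2⟩ := h2
    rw [Prod.smul_mk, Prod.mk.injEq] at hg1 hg2
    refine ⟨g2 * g1⁻¹, ?_, ?_⟩
    · rw [mul_smul, inv_smul_eq_iff.mpr hg1.1.symm, hg2.1]
    · rw [mul_smul, inv_smul_eq_iff.mpr hg1.2.symm, hg2.2]
  have hsendA : ∀ (b : G ⧸ K) (a a' : G ⧸ H), (a, b) ∈ O → (a', b) ∈ O →
      ∃ g : G, g • b = b ∧ g • a = a' := by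
    intro b a a' h1 h2
    rw [hO, mem_orbit_iff] at h1 h2
    obtain ⟨g1, hg1⟩ := h1
    obtain ⟨g2, hg2⟩ := h2
    rw [Prod.smul_mk, Prod.mk.injEq] at hg1 hg2
    refine ⟨g2 * g1⁻¹, ?_, ?_⟩
    · rw [mul_smul, inv_smul_eq_iff.mpr hg1.2.symm, hg2.2]
    · rw [mul_smul, inv_smul_eq_iff.mpr hg1.1.symm, hg2.1]
  have hPbase : {b : G ⧸ K | (a0, b) ∈ O} = MulAction.orbit H b0 := by
    ext b
    simp only [Set.mem_setOf_eq, mem_orbit_iff]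
    constructor
    · intro hb
      obtain ⟨g, hga, hgb⟩ := hsendB a0 b0 b hOmem hb
      have hgH : g ∈ H := by rw [← hstabA]; exact mem_stabilizer_iff.mpr hga
      exact ⟨⟨g, hgH⟩, hgb⟩
    · rintro ⟨⟨g, hgH⟩, hgb⟩
      have hga : g • a0 = a0 := by rw [← hstabA] at hgH; exact hgH
      have : (⟨g, hgH⟩ : H) • b0 = g • b0 := rfl
      rw [this] at hgb
      have := hOsmul g _ hOmem
      rwa [Prod.smul_mk, hga, hgb] at this
  have hQbase : {a : G ⧸ H | (a, b0) ∈ O} = MulAction.orbit K a0 := by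
    ext a
    simp only [Set.mem_setOf_eq, mem_orbit_iff]
    constructor
    · intro ha
      obtain ⟨g, hgb, hga⟩ := hsendA b0 a0 a hOmem ha
      have hgK : g ∈ K := by rw [← hstabB]; exact mem_stabilizer_iff.mpr hgb
      exact ⟨⟨g, hgK⟩, hga⟩
    · rintro ⟨⟨g, hgK⟩, hga⟩
      have hgb : g • b0 = b0 := by rw [← hstabB] at hgK; exact hgK
      have : (⟨g, hgK⟩ : K) • a0 = g • a0 := rfl
      rw [this] at hga
      have := hOsmul g _ hOmem
      rwa [Prod.smul_mk, hga, hgb] at this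
  have hPbasecard : {b : G ⧸ K | (a0, b) ∈ O}.ncard = n - 2 := by
    rw [hPbase, ← Nat.card_coe_set_eq,
      Nat.card_congr (MulAction.orbitEquivQuotientStabilizer H b0), ← Subgroup.index_eq_card]
    have hst : stabilizer H b0 = (H ⊓ K).subgroupOf H := by
      ext ⟨g, hg⟩
      have h1 : (⟨g, hg⟩ : H) • b0 = g • b0 := rfl
      simp only [mem_stabilizer_iff, h1, Subgroup.mem_subgroupOf, Subgroup.mem_inf]
      have h2 : g • b0 = b0 ↔ g ∈ K := mem_stabilizer_iff.symm.trans (SetLike.ext_iff.mp hstabB g)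
      tauto
    rw [hst]
    exact hrelH
  have hQbasecard : {a : G ⧸ H | (a, b0) ∈ O}.ncard = n - 2 := by
    rw [hQbase, ← Nat.card_coe_set_eq,
      Nat.card_congr (MulAction.orbitEquivQuotientStabilizer K a0), ← Subgroup.index_eq_card]
    have hst : stabilizer K a0 = (H ⊓ K).subgroupOf K := by
      ext ⟨g, hg⟩
      have h1 : (⟨g, hg⟩ : K) • a0 = g • a0 := rfl
      simp only [mem_stabilizer_iff, h1, Subgroup.mem_subgroupOf, Subgroup.mem_inf]
      have h2 : g • a0 = a0 ↔ g ∈ H := mem_stabilizer_iff.symm.trans (SetLike.ext_iff.mp hstabA g)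
      tauto
    rw [hst]
    exact hrelK
  have hPcard : ∀ a : G ⧸ H, {b : G ⧸ K | (a, b) ∈ O}.ncard = n - 2 := by
    intro a
    obtain ⟨g, rfl⟩ := htransA a
    have hset2 : {b : G ⧸ K | (g • a0, b) ∈ O} = g • {b : G ⧸ K | (a0, b) ∈ O} := by
      ext b
      simp only [Set.mem_setOf_eq, Set.mem_smul_set_iff_inv_smul_mem]
      constructor
      · intro hb
        have := (hpair g⁻¹ (g • a0) b).mpr hb
        rwa [inv_smul_smul] at this
      · intro hb
        have := (hpair g a0 (g⁻¹ • b)).mpr hb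
        rwa [smul_inv_smul] at this
    rw [hset2, ← Set.image_smul, Set.ncard_image_of_injective _ (MulAction.injective g),
      hPbasecard]
  have hQcard : ∀ b : G ⧸ K, {a : G ⧸ H | (a, b) ∈ O}.ncard = n - 2 := by
    intro b
    obtain ⟨g, rfl⟩ := htransB b
    have hset2 : {a : G ⧸ H | (a, g • b0) ∈ O} = g • {a : G ⧸ H | (a, b0) ∈ O} := by
      ext a
      simp only [Set.mem_setOf_eq, Set.mem_smul_set_iff_inv_smul_mem]
      constructor
      · intro ha
        have := (hpair g⁻¹ a (g • b0)).mpr ha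
        rwa [inv_smul_smul] at this
      · intro ha
        have := (hpair g (g⁻¹ • a) b0).mpr ha
        rwa [smul_inv_smul] at this
    rw [hset2, ← Set.image_smul, Set.ncard_image_of_injective _ (MulAction.injective g),
      hQbasecard]
  have hcardA : Nat.card (G ⧸ H) = n := by rw [← Subgroup.index_eq_card, hHidx]
  have hcardB : Nat.card (G ⧸ K) = n := by rw [← Subgroup.index_eq_card, hKidx]
  have hPc : ∀ a : G ⧸ H, {b : G ⧸ K | (a, b) ∉ O}.ncard = 2 := by
    intro a
    have h := Set.ncard_add_ncard_compl {b : G ⧸ K | (a, b) ∈ O}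
    rw [Set.compl_setOf, hPcard a, hcardB] at h
    omega
  have hQc : ∀ b : G ⧸ K, {a : G ⧸ H | (a, b) ∉ O}.ncard = 2 := by
    intro b
    have h := Set.ncard_add_ncard_compl {a : G ⧸ H | (a, b) ∈ O}
    rw [Set.compl_setOf, hQcard b, hcardA] at h
    omega
  have hstabidxA : ∀ a : G ⧸ H, (stabilizer G a).index = n := fun a => by
    rw [index_stabilizer_of_transitive, hcardA]
  have hstabidxB : ∀ b : G ⧸ K, (stabilizer G b).index = n := fun b => by
    rw [index_stabilizer_of_transitive, hcardB]
  have heqsub : ∀ {H' K' : Subgroup G}, H' ≤ K' → H'.index = n → K'.index = n → H' = K' := by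
    intro H' K' hle h1 h2
    have h := Subgroup.relIndex_mul_index hle
    rw [h1, h2] at h
    have h1' : H'.relIndex K' * n = 1 * n := by rw [h, one_mul]
    exact le_antisymm hle
      (Subgroup.relIndex_eq_one.mp (Nat.eq_of_mul_eq_mul_right hn0 h1'))
  -- extract the two non-partners of a0
  obtain ⟨b1, b2, hb12, hPa0c⟩ := Set.ncard_eq_two.mp (hPc a0)
  have hb1 : (a0, b1) ∉ O := by
    have : b1 ∈ {b : G ⧸ K | (a0, b) ∉ O} := by rw [hPa0c]; left; rfl
    exact this
  have hb2 : (a0, b2) ∉ O := by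
    have : b2 ∈ {b : G ⧸ K | (a0, b) ∉ O} := by rw [hPa0c]; right; rfl
    exact this
  have hPpres : ∀ (g : G) (a : G ⧸ H) (b : G ⧸ K), g • a = a → (a, b) ∉ O → (a, g • b) ∉ O := by
    intro g a b hga hb hmem
    apply hb
    rw [← hga] at hmem
    exact (hpair g a b).mp hmem
  have hQpres : ∀ (g : G) (b : G ⧸ K) (a : G ⧸ H), g • b = b → (a, b) ∉ O → (g • a, b) ∉ O := by
    intro g b a hgb ha hmem
    apply ha
    rw [← hgb] at hmem
    exact (hpair g a b).mp hmem
  by_cases hcase : ∀ g : G, g • a0 = a0 → g • b1 = b1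
  · -- Case I : the stabilizer of a0 fixes b1 (and b2)
    have hle : H ≤ stabilizer G b1 := by
      intro g hg
      have hga : g • a0 = a0 := by rw [← hstabA] at hg; exact hg
      exact mem_stabilizer_iff.mpr (hcase g hga)
    have hH1 : H = stabilizer G b1 := heqsub hle hHidx (hstabidxB b1)
    obtain ⟨a1, ha1, hQ1⟩ := pair_extract (hQc b1) (show a0 ∈ {a : G ⧸ H | (a, b1) ∉ O} from hb1)
    have hfix1 : ∀ g : G, g • a0 = a0 → g • a1 = a1 := by
      intro g hg
      have hgb1 : g • b1 = b1 := hcase g hg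
      have ha1b1 : (a1, b1) ∉ O := by
        have : a1 ∈ {a : G ⧸ H | (a, b1) ∉ O} := by rw [hQ1]; right; rfl
        exact this
      have hmem : g • a1 ∈ {a : G ⧸ H | (a, b1) ∉ O} := hQpres g b1 a1 hgb1 ha1b1
      rw [hQ1] at hmem
      rcases Set.mem_insert_iff.mp hmem with h | h
      · exfalso
        apply ha1
        rw [← hg] at h
        exact MulAction.injective g h
      · rwa [Set.mem_singleton_iff] at h
    have hstaba1 : stabilizer G a1 = stabilizer G a0 := by
      have hle1 : H ≤ stabilizer G a1 := by
        intro g hg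
        have hga : g • a0 = a0 := by rw [← hstabA] at hg; exact hg
        exact mem_stabilizer_iff.mpr (hfix1 g hga)
      rw [(heqsub hle1 hHidx (hstabidxA a1)).symm, hstabA]
    have hfiber : {a : G ⧸ H | stabilizer G a = stabilizer G a0} = {a0, a1} := by
      ext a
      simp only [Set.mem_setOf_eq, Set.mem_insert_iff, Set.mem_singleton_iff]
      constructor
      · intro hstab
        by_contra hcon
        push_neg at hcon
        have haQ : (a, b1) ∈ O := by
          by_contra hnot
          have : a ∈ ({a0, a1} : Set (G ⧸ H)) := by rw [← hQ1]; exact hnot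
          rcases Set.mem_insert_iff.mp this with h | h
          · exact hcon.1 h
          · exact hcon.2 (Set.mem_singleton_iff.mp h)
        have h1lt : 1 < {a' : G ⧸ H | (a', b1) ∈ O}.ncard := by rw [hQcard b1]; omega
        obtain ⟨a', ha'mem, ha'ne⟩ := Set.exists_ne_of_one_lt_ncard h1lt a
        obtain ⟨g, hgb, hga⟩ := hsendA b1 a a' haQ ha'mem
        have hgH : g ∈ stabilizer G a := by
          rw [hstab, hstabA, hH1]
          exact mem_stabilizer_iff.mpr hgb
        exact ha'ne (by rw [← hga, mem_stabilizer_iff.mp hgH])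
      · rintro (rfl | rfl)
        · rfl
        · exact hstaba1
    have hconjmem : ∀ (g x : G) (a : G ⧸ H),
        x ∈ stabilizer G (g • a) ↔ g⁻¹ * x * g ∈ stabilizer G a := by
      intro g x a
      rw [mem_stabilizer_iff, mem_stabilizer_iff, mul_smul, mul_smul, inv_smul_eq_iff]
    have hf : ∀ (g : G) (a : G ⧸ H),
        {a' : G ⧸ H | stabilizer G a' = stabilizer G (g • a)} =
          g • {a' : G ⧸ H | stabilizer G a' = stabilizer G a} := by
      intro g a
      ext a'
      simp only [Set.mem_setOf_eq, Set.mem_smul_set_iff_inv_smul_mem]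
      constructor
      · intro he
        ext x
        rw [hconjmem g⁻¹ x a', inv_inv, he, hconjmem g (g * x * g⁻¹) a]
        have hx : g⁻¹ * (g * x * g⁻¹) * g = x := by group
        rw [hx]
      · intro he
        ext x
        rw [hconjmem g x a, ← he, hconjmem g⁻¹ (g⁻¹ * x * g) a', inv_inv]
        have hx : g * (g⁻¹ * x * g) * g⁻¹ = x := by group
        rw [hx]
    have heven := even_card_aux
      (f := fun a : G ⧸ H => {a' : G ⧸ H | stabilizer G a' = stabilizer G a})
      (fun g a => hf g a) a0 htransA ?_
    · rw [hcardA] at heven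
      exact (Nat.not_odd_iff_even.mpr heven) hodd
    · have hsetfib : {a : G ⧸ H |
          {a' : G ⧸ H | stabilizer G a' = stabilizer G a} =
            {a' : G ⧸ H | stabilizer G a' = stabilizer G a0}} =
          {a : G ⧸ H | stabilizer G a = stabilizer G a0} := by
        ext a
        simp only [Set.mem_setOf_eq]
        constructor
        · intro h
          have ha : a ∈ {a' : G ⧸ H | stabilizer G a' = stabilizer G a} := rfl
          rw [h] at ha
          exact ha
        · intro h
          ext a'
          simp only [Set.mem_setOf_eq, h]
      rw [hsetfib, hfiber]
      exact Set.ncard_pair (Ne.symm ha1)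
  · -- Case II : some element of the stabilizer of a0 swaps b1 and b2
    push_neg at hcase
    obtain ⟨h, hha0, hhb1ne⟩ := hcase
    have hhb1 : h • b1 = b2 := by
      have hmem : h • b1 ∈ {b : G ⧸ K | (a0, b) ∉ O} := hPpres h a0 b1 hha0 hb1
      rw [hPa0c] at hmem
      rcases Set.mem_insert_iff.mp hmem with hx | hx
      · exact absurd hx hhb1ne
      · exact Set.mem_singleton_iff.mp hx
    obtain ⟨a1, ha1, hQ1⟩ := pair_extract (hQc b1) (show a0 ∈ {a : G ⧸ H | (a, b1) ∉ O} from hb1)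
    obtain ⟨a2, ha2, hQ2⟩ := pair_extract (hQc b2) (show a0 ∈ {a : G ⧸ H | (a, b2) ∉ O} from hb2)
    have ha1b1 : (a1, b1) ∉ O := by
      have : a1 ∈ {a : G ⧸ H | (a, b1) ∉ O} := by rw [hQ1]; right; rfl
      exact this
    have ha2b2 : (a2, b2) ∉ O := by
      have : a2 ∈ {a : G ⧸ H | (a, b2) ∉ O} := by rw [hQ2]; right; rfl
      exact this
    -- find k1 in the stabilizer of b1 moving a0 to a1
    have hk1 : ∃ k : G, k • b1 = b1 ∧ k • a0 = a1 := by
      have hnotall : ¬ ∀ k : G, k • b1 = b1 → k • a0 = a0 := by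
        intro hall
        have hle : stabilizer G b1 ≤ H := by
          intro g hg
          rw [← hstabA]
          exact mem_stabilizer_iff.mpr (hall g (mem_stabilizer_iff.mp hg))
        have := heqsub hle (hstabidxB b1) hHidx
        apply hhb1ne
        have hhmem : h ∈ stabilizer G b1 := by
          rw [this, ← hstabA]
          exact mem_stabilizer_iff.mpr hha0
        exact mem_stabilizer_iff.mp hhmem
      push_neg at hnotall
      obtain ⟨k, hkb, hknot⟩ := hnotall
      have hmem : k • a0 ∈ {a : G ⧸ H | (a, b1) ∉ O} := hQpres k b1 a0 hkb hb1
      rw [hQ1] at hmem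
      rcases Set.mem_insert_iff.mp hmem with hx | hx
      · exact absurd hx hknot
      · exact ⟨k, hkb, Set.mem_singleton_iff.mp hx⟩
    obtain ⟨k1, hk1b, hk1a⟩ := hk1
    by_cases ha12 : a2 = a1
    · -- the two non-partner pairs coincide : parity contradiction
      have ha1b2 : (a1, b2) ∉ O := by rw [← ha12]; exact ha2b2
      have hfa1 : {b : G ⧸ K | (a1, b) ∉ O} = {b1, b2} := by
        symm
        apply Set.eq_of_subset_of_ncard_le
        · rintro b hbmem
          rcases Set.mem_insert_iff.mp hbmem with hx | hx
          · subst hx; exact ha1b1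
          · rw [Set.mem_singleton_iff] at hx; subst hx; exact ha1b2
        · rw [hPc a1, Set.ncard_pair hb12]
        · exact Set.toFinite _
      have hfiber : {a : G ⧸ H |
          {b : G ⧸ K | (a, b) ∉ O} = {b : G ⧸ K | (a0, b) ∉ O}} = {a0, a1} := by
        ext a
        simp only [Set.mem_setOf_eq, Set.mem_insert_iff, Set.mem_singleton_iff]
        constructor
        · intro hfa
          have hab1 : (a, b1) ∉ O := by
            have : b1 ∈ {b : G ⧸ K | (a, b) ∉ O} := by rw [hfa, hPa0c]; left; rfl
            exact this
          have : a ∈ ({a0, a1} : Set (G ⧸ H)) := by rw [← hQ1]; exact hab1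
          rcases Set.mem_insert_iff.mp this with hx | hx
          · exact Or.inl hx
          · exact Or.inr (Set.mem_singleton_iff.mp hx)
        · rintro (rfl | rfl)
          · rfl
          · rw [hfa1, hPa0c]
      have hf : ∀ (g : G) (a : G ⧸ H),
          {b : G ⧸ K | (g • a, b) ∉ O} = g • {b : G ⧸ K | (a, b) ∉ O} := by
        intro g a
        ext b
        simp only [Set.mem_setOf_eq, Set.mem_smul_set_iff_inv_smul_mem]
        constructor
        · intro hb hmem
          apply hb
          have := (hpair g a (g⁻¹ • b)).mpr hmem
          rwa [smul_inv_smul] at this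
        · intro hb hmem
          apply hb
          have := (hpair g⁻¹ (g • a) b).mpr hmem
          rwa [inv_smul_smul] at this
      have heven := even_card_aux
        (f := fun a : G ⧸ H => {b : G ⧸ K | (a, b) ∉ O})
        (fun g a => hf g a) a0 htransA ?_
      · rw [hcardA] at heven
        exact (Nat.not_odd_iff_even.mpr heven) hodd
      · rw [hfiber]
        exact Set.ncard_pair (Ne.symm ha1)
    · -- the generic case : Q b1 would have at most two elements
      have ha2b1 : (a2, b1) ∈ O := by
        by_contra hnot
        have : a2 ∈ ({a0, a1} : Set (G ⧸ H)) := by rw [← hQ1]; exact hnot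
        rcases Set.mem_insert_iff.mp this with hx | hx
        · exact ha2 hx
        · exact ha12 (Set.mem_singleton_iff.mp hx)
      have hfixa2 : ∀ g : G, g • b1 = b1 → g • a0 = a0 → g • a2 = a2 := by
        intro g hgb1 hga0
        have hgb2 : g • b2 = b2 := by
          have hmem : g • b2 ∈ {b : G ⧸ K | (a0, b) ∉ O} := hPpres g a0 b2 hga0 hb2
          rw [hPa0c] at hmem
          rcases Set.mem_insert_iff.mp hmem with hx | hx
          · exfalso
            apply hb12
            rw [← hgb1] at hx
            exact (MulAction.injective g hx).symm
          · exact Set.mem_singleton_iff.mp hx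
        have hmem2 : g • a2 ∈ {a : G ⧸ H | (a, b2) ∉ O} := hQpres g b2 a2 hgb2 ha2b2
        rw [hQ2] at hmem2
        rcases Set.mem_insert_iff.mp hmem2 with hx | hx
        · exfalso
          apply ha2
          rw [← hga0] at hx
          exact MulAction.injective g hx
        · exact Set.mem_singleton_iff.mp hx
      have hsub : {a : G ⧸ H | (a, b1) ∈ O} ⊆ {a2, k1 • a2} := by
        intro a ha
        obtain ⟨k, hkb, hka⟩ := hsendA b1 a2 a ha2b1 ha
        have hk0 : k • a0 ∈ ({a0, a1} : Set (G ⧸ H)) := by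
          rw [← hQ1]
          exact hQpres k b1 a0 hkb hb1
        rcases Set.mem_insert_iff.mp hk0 with hx | hx
        · left
          rw [← hka, hfixa2 k hkb hx]
        · right
          rw [Set.mem_singleton_iff] at hx
          have hk'b : (k1⁻¹ * k) • b1 = b1 := by
            rw [mul_smul, hkb, inv_smul_eq_iff, hk1b]
          have hk'a : (k1⁻¹ * k) • a0 = a0 := by
            rw [mul_smul, hx, inv_smul_eq_iff, hk1a]
          have hfix := hfixa2 (k1⁻¹ * k) hk'b hk'a
          rw [mul_smul, inv_smul_eq_iff] at hfix
          rw [← hka, ← hfix]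
          rfl
      have hle2 := Set.ncard_le_ncard hsub (Set.toFinite _)
      rw [hQcard b1] at hle2
      have hpair2 : ({a2, k1 • a2} : Set (G ⧸ H)).ncard ≤ 2 := by
        apply le_trans (Set.ncard_insert_le _ _)
        rw [Set.ncard_singleton]
      omega

lemma realizable_three : IndexRealizable 3 3 3 := by
  refine ⟨Multiplicative (ZMod 3), inferInstance, ⊥, ⊥, ?_, ?_, ?_, ?_, ?_⟩ <;>
    simp [Subgroup.index_bot, Nat.card_eq_fintype_card]

section EvenConstruction

variable {m : ℕ}

instance perm_pretrans (α : Type) [DecidableEq α] : IsPretransitive (Equiv.Perm α) α :=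
  ⟨fun x y => ⟨Equiv.swap x y, Equiv.swap_apply_left x y⟩⟩

lemma realizable_even (hm : 2 ≤ m) :
    IndexRealizable (2 * m) (2 * m) (2 * m * (2 * m - 2)) := by
  classical
  have hmpos : 0 < m := by omega
  set C2 := Multiplicative (ZMod 2) with hC2
  set Sm := Equiv.Perm (Fin m) with hSm
  set x0 : Fin m := ⟨0, by omega⟩
  set x1 : Fin m := ⟨1, by omega⟩
  have hx01 : x0 ≠ x1 := by simp [x0, x1, Fin.ext_iff]
  have hcard2 : Nat.card C2 = 2 := by simp [hC2, Nat.card_eq_fintype_card]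
  have hcardFin : Nat.card (Fin m) = m := by simp
  -- index of point stabilizers
  have hstabidx : ∀ x : Fin m, (stabilizer Sm x).index = m := fun x => by
    rw [index_stabilizer_of_transitive, hcardFin]
  -- stabilizer of the pair
  have hstabpair : ∀ x y : Fin m,
      stabilizer Sm ((x, y) : Fin m × Fin m) = stabilizer Sm x ⊓ stabilizer Sm y := by
    intro x y
    ext σ
    simp [mem_stabilizer_iff, Prod.ext_iff]
  -- orbit of the pair (x0, x1)
  have horbit : orbit Sm ((x0, x1) : Fin m × Fin m) = {p : Fin m × Fin m | p.1 ≠ p.2} := by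
    ext ⟨x, y⟩
    simp only [Set.mem_setOf_eq, mem_orbit_iff]
    constructor
    · rintro ⟨σ, hσ⟩
      rw [Prod.smul_def, Prod.ext_iff] at hσ
      obtain ⟨h1, h2⟩ := hσ
      simp only [Equiv.Perm.smul_def] at h1 h2
      rw [← h1, ← h2]
      exact fun h => hx01 (σ.injective h)
    · intro hxy
      refine ⟨Equiv.swap x0 x * Equiv.swap x1 (Equiv.swap x0 x y), ?_⟩
      rw [Prod.smul_def, Prod.ext_iff]
      constructor
      · show (Equiv.swap x0 x) (Equiv.swap x1 (Equiv.swap x0 x y) x0) = x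
        rw [Equiv.swap_apply_of_ne_of_ne hx01 ?h1, Equiv.swap_apply_left]
        case h1 =>
          intro h
          apply hxy
          have h2 := congrArg (Equiv.swap x0 x) h
          rw [Equiv.swap_apply_self, Equiv.swap_apply_left] at h2
          exact h2
      · show (Equiv.swap x0 x) (Equiv.swap x1 (Equiv.swap x0 x y) x1) = y
        rw [Equiv.swap_apply_left, Equiv.swap_apply_self]
  have hdiag : ({p : Fin m × Fin m | p.1 = p.2}).ncard = m := by
    have : {p : Fin m × Fin m | p.1 = p.2} = (fun a : Fin m => (a, a)) '' Set.univ := by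
      ext ⟨x, y⟩
      simp only [Set.mem_setOf_eq, Set.image_univ, Set.mem_range, Prod.ext_iff]
      constructor
      · rintro rfl; exact ⟨x, rfl, rfl⟩
      · rintro ⟨a, rfl, rfl⟩; rfl
    rw [this, Set.ncard_image_of_injective _ (fun a b h => (Prod.ext_iff.mp h).1),
      Set.ncard_univ, hcardFin]
  have hoffdiag : ({p : Fin m × Fin m | p.1 ≠ p.2}).ncard = m * m - m := by
    have h := Set.ncard_add_ncard_compl {p : Fin m × Fin m | p.1 = p.2}
    have hc : ({p : Fin m × Fin m | p.1 = p.2}ᶜ) = {p : Fin m × Fin m | p.1 ≠ p.2} := by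
      ext p; simp
    rw [hdiag, hc] at h
    have hcardprod : Nat.card (Fin m × Fin m) = m * m := by simp
    omega
  have hpairidx : (stabilizer Sm x0 ⊓ stabilizer Sm x1).index = m * (m - 1) := by
    rw [← hstabpair, index_stabilizer, horbit, hoffdiag, Nat.mul_sub, mul_one]
  refine ⟨C2 × C2 × Sm, inferInstance,
    (⊤ : Subgroup C2).prod ((⊥ : Subgroup C2).prod (stabilizer Sm x0)),
    (⊥ : Subgroup C2).prod ((⊤ : Subgroup C2).prod (stabilizer Sm x1)),
    ?_, ?_, ?_, ?_, ?_⟩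
  · rw [Subgroup.index_prod, Subgroup.index_prod, Subgroup.index_top, Subgroup.index_bot,
      hcard2, hstabidx]
    positivity
  · rw [Subgroup.index_prod, Subgroup.index_prod, Subgroup.index_top, Subgroup.index_bot,
      hcard2, hstabidx]
    positivity
  · rw [Subgroup.index_prod, Subgroup.index_prod, Subgroup.index_top, Subgroup.index_bot,
      hcard2, hstabidx]
    ring
  · rw [Subgroup.index_prod, Subgroup.index_prod, Subgroup.index_top, Subgroup.index_bot,
      hcard2, hstabidx]
    ring
  · have hinf : ((⊤ : Subgroup C2).prod ((⊥ : Subgroup C2).prod (stabilizer Sm x0))) ⊓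
        ((⊥ : Subgroup C2).prod ((⊤ : Subgroup C2).prod (stabilizer Sm x1))) =
        (⊥ : Subgroup C2).prod ((⊥ : Subgroup C2).prod
          (stabilizer Sm x0 ⊓ stabilizer Sm x1)) := by
      ext ⟨c1, c2, σ⟩
      simp only [Subgroup.mem_inf, Subgroup.mem_prod]
      tauto
    rw [hinf, Subgroup.index_prod, Subgroup.index_prod, Subgroup.index_bot, hcard2,
      hpairidx]
    have h2 : 2 * m - 2 = 2 * (m - 1) := by omega
    rw [h2]
    ring

end EvenConstruction

theorem not_indexRealizable_n_n_n_mul_sub_two_iff (n : ℕ) (hn : 2 < n) :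
    ¬ IndexRealizable n n (n * (n - 2)) ↔ Odd n ∧ n ≠ 3 := by
  constructor
  · intro hnot
    by_contra hcon
    rcases Nat.even_or_odd n with he | ho
    · obtain ⟨m, hm⟩ := he
      have hm2 : 2 ≤ m := by omega
      have hn2m : n = 2 * m := by omega
      apply hnot
      rw [hn2m]
      exact realizable_even hm2
    · have h3 : n = 3 := by
        by_contra h3ne
        exact hcon ⟨ho, h3ne⟩
      apply hnot
      rw [h3]
      exact realizable_three
  · rintro ⟨ho, h3⟩
    have h5 : 5 ≤ n := by
      obtain ⟨k, hk⟩ := ho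
      omega
    exact not_realizable_odd h5 ho
end

section
/- Let n be a positive integer and p a prime such that p + 1 < n < 2p. Then the triple (n, n, n·p) is not index-realizable. -/
section Helpers

open MulAction Subgroup

variable {G : Type} [Group G]

private lemma fix_iff (K : Subgroup G) (y u : G) :
    y • (QuotientGroup.mk u : G ⧸ K) = QuotientGroup.mk u ↔ u⁻¹ * y * u ∈ K := by
  have h1 : y • (QuotientGroup.mk u : G ⧸ K) = QuotientGroup.mk (y * u) := rfl
  rw [h1, QuotientGroup.eq]
  constructor
  · intro h
    have := K.inv_mem h
    simpa [mul_assoc] using this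
  · intro h
    have := K.inv_mem h
    simpa [mul_assoc] using this

private lemma mem_orbit_one_iff (H K : Subgroup G) (u : G) :
    (QuotientGroup.mk u : G ⧸ K) ∈ orbit (↥H) ((1 : G) : G ⧸ K) ↔
      ∃ h ∈ H, ∃ k ∈ K, u = h * k := by
  constructor
  · rintro ⟨⟨h, hh⟩, he⟩
    have he' : (QuotientGroup.mk (h * 1) : G ⧸ K) = QuotientGroup.mk u := he
    rw [mul_one, QuotientGroup.eq] at he'
    exact ⟨h, hh, h⁻¹ * u, he', by group⟩
  · rintro ⟨h, hh, k, hk, rfl⟩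
    refine ⟨⟨h, hh⟩, ?_⟩
    show (QuotientGroup.mk (h * 1) : G ⧸ K) = QuotientGroup.mk (h * k)
    rw [mul_one, QuotientGroup.eq]
    simpa using hk

private lemma orbit_overlap {M α : Type} [Group M] [MulAction M α] {x x' w : α}
    (h1 : w ∈ orbit M x) (h2 : w ∈ orbit M x') : x' ∈ orbit M x := by
  obtain ⟨g, rfl⟩ := h1
  obtain ⟨g', hg'⟩ := h2
  have hg'' : g' • x' = g • x := hg'
  refine ⟨g'⁻¹ * g, ?_⟩
  show (g'⁻¹ * g) • x = x'
  rw [mul_smul, ← hg'', inv_smul_smul]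

private lemma zorbit_card_dvd {α : Type} [MulAction G α] (y : G) (x : α) :
    (orbit (↥(zpowers y)) x).ncard ∣ orderOf y := by
  rw [← MulAction.index_stabilizer]
  have h := (stabilizer (↥(zpowers y)) x).index_dvd_card
  rwa [Nat.card_zpowers] at h

private lemma smul_mem_zorbit {α : Type} [MulAction G α] (y : G) (x : α) :
    y • x ∈ orbit (↥(zpowers y)) x :=
  ⟨⟨y, mem_zpowers y⟩, rfl⟩

private lemma zorbit_card_ge {α : Type} [MulAction G α] [Finite α] {p v : ℕ} (hp : p.Prime)
    {y : G} (hord : orderOf y = p ^ v) {x : α} (hyx : y • x ≠ x) :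
    p ≤ (orbit (↥(zpowers y)) x).ncard := by
  have hsub : ({x, y • x} : Set α) ⊆ orbit (↥(zpowers y)) x := by
    intro w hw
    rcases hw with h | h
    · rw [h]; exact mem_orbit_self x
    · rw [h]; exact smul_mem_zorbit y x
  have h2 : 2 ≤ (orbit (↥(zpowers y)) x).ncard := by
    have := Set.ncard_le_ncard hsub (Set.toFinite _)
    rwa [Set.ncard_pair (Ne.symm hyx)] at this
  have hdvd : (orbit (↥(zpowers y)) x).ncard ∣ p ^ v := hord ▸ zorbit_card_dvd y x
  obtain ⟨i, _, hi⟩ := (Nat.dvd_prime_pow hp).mp hdvd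
  rcases Nat.eq_zero_or_pos i with h0 | h0
  · rw [h0, pow_zero] at hi; omega
  · have hpd : p ∣ (orbit (↥(zpowers y)) x).ncard := by
      rw [hi]; exact dvd_pow_self p h0.ne'
    exact Nat.le_of_dvd (by omega) hpd

end Helpers

open MulAction Subgroup in
private lemma exists_good_elt {G : Type} [Group G] [Finite G] (H K : Subgroup G) {p : ℕ}
    (hp : p.Prime)
    (hOcard : (orbit (↥H) (((1 : G)) : G ⧸ K)).ncard = p) :
    ∃ z : G, z ∈ H ∧ ∃ v : ℕ, orderOf z = p ^ v ∧
      ∀ x : G ⧸ K, x ∈ orbit (↥H) (((1 : G)) : G ⧸ K) → z • x ≠ x := by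
  classical
  set b : G ⧸ K := ((1 : G) : G ⧸ K) with hb
  set O : Set (G ⧸ K) := orbit (↥H) b with hO
  haveI : Fact p.Prime := ⟨hp⟩
  set φ : ↥H →* Equiv.Perm ↥O := MulAction.toPermHom (↥H) (↥O) with hφ
  have hOcard' : Nat.card ↥O = p := by rw [Nat.card_coe_set_eq, hOcard]
  have hpdvd : p ∣ Nat.card ↥φ.range := by
    set bb : ↥O := ⟨b, mem_orbit_self b⟩ with hbb
    have horb : orbit (↥φ.range) bb = Set.univ := by
      ext x
      simp only [Set.mem_univ, iff_true]
      obtain ⟨h, hh⟩ := x.2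
      refine ⟨⟨φ h, h, rfl⟩, ?_⟩
      show φ h bb = x
      ext
      show h • b = x.val
      exact hh
    have h1 := MulAction.index_stabilizer (↥φ.range) bb
    rw [horb, Set.ncard_univ, hOcard'] at h1
    exact h1 ▸ (stabilizer (↥φ.range) bb).index_dvd_card
  haveI : Fintype ↥φ.range := Fintype.ofFinite ↥φ.range
  obtain ⟨σ, hσ⟩ := exists_prime_orderOf_dvd_card (G := ↥φ.range) p
    (by rwa [← Nat.card_eq_fintype_card])
  obtain ⟨z₀, hz₀⟩ := σ.2
  have hσord : orderOf (σ : Equiv.Perm ↥O) = p := by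
    rw [Subgroup.orderOf_coe]; exact hσ
  set m := orderOf z₀ with hm
  have hm0 : m ≠ 0 := by
    have : 0 < orderOf z₀ := orderOf_pos z₀
    omega
  have hpm : p ∣ m := by
    have h1 : orderOf (φ z₀) ∣ m := orderOf_map_dvd φ z₀
    rwa [hz₀, hσord] at h1
  set v := m.factorization p with hv
  set q := m / p ^ v with hq
  have hmq : p ^ v * q = m := Nat.ordProj_mul_ordCompl_eq_self m p
  have hqnd : ¬ p ∣ q := Nat.not_dvd_ordCompl hp hm0
  have hqm : q ∣ m := Nat.ordCompl_dvd m p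
  have hq0 : q ≠ 0 := by
    intro h; rw [h, mul_zero] at hmq; exact hm0 hmq.symm
  set z1 : ↥H := z₀ ^ q with hz1
  have hz1ord : orderOf z1 = p ^ v := by
    rw [hz1, orderOf_pow, ← hm, Nat.gcd_eq_right hqm]
    exact Nat.div_eq_of_eq_mul_right (Nat.pos_of_ne_zero hq0) (by rw [← hmq, Nat.mul_comm])
  have hφz1 : orderOf (φ z1) = p := by
    rw [hz1, map_pow, hz₀, orderOf_pow, hσord,
      (hp.coprime_iff_not_dvd.mpr hqnd : Nat.gcd p q = 1), Nat.div_one]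
  -- z1 acts fixed-point-freely on O
  have hfpf : ∀ x : ↥O, φ z1 x ≠ x := by
    intro x hx
    have hne : φ z1 ≠ 1 := by
      intro h; rw [h, orderOf_one] at hφz1; exact hp.ne_one hφz1.symm
    obtain ⟨y, hy⟩ : ∃ y : ↥O, φ z1 y ≠ y := by
      by_contra hall
      push_neg at hall
      exact hne (Equiv.ext hall)
    have hyy : (φ z1) • y ≠ y := hy
    have hygep : p ≤ (orbit (↥(zpowers (φ z1))) y).ncard :=
      zorbit_card_ge hp (v := 1) (by rw [pow_one]; exact hφz1) hyy
    have hxnot : x ∉ orbit (↥(zpowers (φ z1))) y := by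
      rintro ⟨⟨g, j, rfl⟩, hg⟩
      have hg' : (φ z1) ^ j • y = x := hg
      have hx' : (φ z1) ∈ stabilizer (Equiv.Perm ↥O) x := hx
      have h2 : ((φ z1) ^ j)⁻¹ ∈ stabilizer (Equiv.Perm ↥O) x :=
        (stabilizer (Equiv.Perm ↥O) x).inv_mem
          ((stabilizer (Equiv.Perm ↥O) x).zpow_mem hx' j)
      have h3 : y = ((φ z1) ^ j)⁻¹ • x := by rw [← hg', inv_smul_smul]
      have h4 : y = x := by rw [h3]; exact h2
      exact hy (by rw [h4]; exact hx)
    have : p + 1 ≤ Nat.card ↥O := by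
      have h1 : (insert x (orbit (↥(zpowers (φ z1))) y)).ncard
          = (orbit (↥(zpowers (φ z1))) y).ncard + 1 :=
        Set.ncard_insert_of_notMem hxnot (Set.toFinite _)
      have h2 := Set.ncard_le_ncard (Set.subset_univ
        (insert x (orbit (↥(zpowers (φ z1))) y))) (Set.toFinite _)
      rw [Set.ncard_univ, h1] at h2
      omega
    omega
  -- pass to G
  set z : G := (z1 : G) with hz
  have hzH : z ∈ H := z1.2
  have hzord : orderOf z = p ^ v := by rw [hz, Subgroup.orderOf_coe, hz1ord]
  -- z moves every point of O
  have hzmoves : ∀ x : G ⧸ K, x ∈ O → z • x ≠ x := by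
    intro x hx he
    apply hfpf ⟨x, hx⟩
    ext
    show z1 • x = x
    change z • x = x
    exact he
  exact ⟨z, hzH, v, hzord, hzmoves⟩


open MulAction Subgroup in
private theorem finite_case {G : Type} [Group G] [Finite G] {H K : Subgroup G} {n p : ℕ}
    (hp : p.Prime) (h₁ : p + 1 < n) (h₂ : n < 2 * p)
    (hH : H.index = n) (hK : K.index = n) (hHK : (H ⊓ K).index = n * p) : False := by
  classical
  have hn0 : n ≠ 0 := by omega
  have hp2 : 2 ≤ p := hp.two_le
  -- the base point and the orbit O
  set b : G ⧸ K := ((1 : G) : G ⧸ K) with hb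
  set O : Set (G ⧸ K) := orbit (↥H) b with hO
  have hcardGK : Nat.card (G ⧸ K) = n := hK
  have hcardGH : Nat.card (G ⧸ H) = n := hH
  -- |O| = p
  have hstab : stabilizer (↥H) b = K.subgroupOf H := by
    ext ⟨h, hh⟩
    rw [mem_stabilizer_iff, Subgroup.mem_subgroupOf]
    show h • ((1 : G) : G ⧸ K) = ((1 : G) : G ⧸ K) ↔ _
    rw [show h • (((1 : G)) : G ⧸ K) = (QuotientGroup.mk (h * 1) : G ⧸ K) from rfl,
      mul_one, QuotientGroup.eq]
    simp
  have hOcard : O.ncard = p := by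
    rw [hO, ← MulAction.index_stabilizer, hstab]
    have h1 : (H ⊓ K).relIndex H * H.index = (H ⊓ K).index :=
      Subgroup.relIndex_mul_index inf_le_left
    rw [Subgroup.inf_relIndex_left, hH, hHK] at h1
    have h2 : K.relIndex H * n = p * n := by rw [h1, Nat.mul_comm]
    exact Nat.eq_of_mul_eq_mul_right (Nat.pos_of_ne_zero hn0) h2
  -- construct z ∈ H of p-power order acting fixed-point-freely on O
  obtain ⟨z, hzH, v, hzord, hzmoves⟩ := exists_good_elt H K hp hOcard
  -- Claim A
  have claimA : ∀ y : G, y ∈ H → orderOf y = p ^ v → ∀ u : G,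
      ¬(∃ h ∈ H, ∃ k ∈ K, u = h * k) → u⁻¹ * y * u ∈ K := by
    intro y hy hyord u hu
    by_contra hyK
    have hmove : y • (QuotientGroup.mk u : G ⧸ K) ≠ QuotientGroup.mk u := by
      intro he; exact hyK ((fix_iff K y u).mp he)
    have h1 : p ≤ (orbit (↥(zpowers y)) (QuotientGroup.mk u : G ⧸ K)).ncard :=
      zorbit_card_ge hp hyord hmove
    have h2 : orbit (↥(zpowers y)) (QuotientGroup.mk u : G ⧸ K)
        ⊆ orbit (↥H) (QuotientGroup.mk u : G ⧸ K) := by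
      rintro w ⟨⟨g, hg⟩, rfl⟩
      exact ⟨⟨g, (Subgroup.zpowers_le.mpr hy) hg⟩, rfl⟩
    have h3 : p ≤ (orbit (↥H) (QuotientGroup.mk u : G ⧸ K)).ncard :=
      le_trans h1 (Set.ncard_le_ncard h2 (Set.toFinite _))
    have hdisj : Disjoint (orbit (↥H) (QuotientGroup.mk u : G ⧸ K)) O := by
      rw [Set.disjoint_left]
      intro w hw1 hw2
      have : (QuotientGroup.mk u : G ⧸ K) ∈ O := orbit_overlap hw2 hw1
      exact hu ((mem_orbit_one_iff H K u).mp this)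
    have hle : (orbit (↥H) (QuotientGroup.mk u : G ⧸ K)).ncard + O.ncard ≤ n := by
      have h4 : (orbit (↥H) (QuotientGroup.mk u : G ⧸ K) ∪ O).ncard
          = (orbit (↥H) (QuotientGroup.mk u : G ⧸ K)).ncard + O.ncard :=
        Set.ncard_union_eq hdisj (Set.toFinite _) (Set.toFinite _)
      have h5 := Set.ncard_le_ncard (Set.subset_univ
        (orbit (↥H) (QuotientGroup.mk u : G ⧸ K) ∪ O)) (Set.toFinite _)
      rw [Set.ncard_univ, hcardGK] at h5
      omega
    omega
  -- Claim B
  have claimB : ∀ u : G, (∃ h ∈ H, ∃ k ∈ K, u = h * k) → u⁻¹ * z * u ∉ K := by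
    intro u hu hzK
    have h1 : (QuotientGroup.mk u : G ⧸ K) ∈ O := (mem_orbit_one_iff H K u).mpr hu
    exact hzmoves _ h1 ((fix_iff K z u).mpr hzK)
  -- the sets C and A
  set Cset : Set G := {u : G | u⁻¹ * z * u ∈ H} with hCset
  set Aset : Set G := {u : G | ¬(∃ h ∈ H, ∃ k ∈ K, u = h * k)} with hAset
  have claimC : ∀ c ∈ Cset, ∀ a ∈ Aset, c * a ∈ Aset := by
    intro c hc a ha
    by_contra hca
    have hca' : ∃ h ∈ H, ∃ k ∈ K, c * a = h * k := not_not.mp hca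
    set y := c⁻¹ * z * c with hy
    have hyH : y ∈ H := hc
    have hyord : orderOf y = p ^ v := by
      rw [hy, ← hzord]
      have : c⁻¹ * z * c = (MulAut.conj c⁻¹) z := by
        simp [MulAut.conj_apply]
      rw [this]
      exact orderOf_injective (MulAut.conj c⁻¹).toMonoidHom
        (MulAut.conj c⁻¹).injective z
    have h1 : a⁻¹ * y * a ∈ K := claimA y hyH hyord a ha
    have h2 : (c * a)⁻¹ * z * (c * a) ∈ K := by
      have : (c * a)⁻¹ * z * (c * a) = a⁻¹ * y * a := by
        rw [hy]; group
      rw [this]; exact h1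
    exact claimB (c * a) hca' h2
  -- C as preimage
  set Cq : Set (G ⧸ H) := {x : G ⧸ H | z • x = x} with hCq
  have hCpre : Cset = QuotientGroup.mk ⁻¹' Cq := by
    ext u
    rw [hCset, hCq]
    simp only [Set.mem_setOf_eq, Set.mem_preimage]
    exact (fix_iff H z u).symm
  -- |Cq| ≥ n - p
  have hCqcard : n - p ≤ Cq.ncard := by
    have hMv : Cqᶜ.ncard ≤ p := by
      rcases Set.eq_empty_or_nonempty Cqᶜ with hemp | ⟨x₁, hx₁⟩
      · rw [hemp, Set.ncard_empty]; omega
      · have hx₁m : z • x₁ ≠ x₁ := hx₁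
        have hsub : Cqᶜ ⊆ orbit (↥(zpowers z)) x₁ := by
          intro x₂ hx₂
          by_contra hnot
          have hx₂m : z • x₂ ≠ x₂ := hx₂
          have hd : Disjoint (orbit (↥(zpowers z)) x₁) (orbit (↥(zpowers z)) x₂) := by
            rw [Set.disjoint_left]
            intro w hw1 hw2
            exact hnot (orbit_overlap hw1 hw2)
          have hc1 : p ≤ (orbit (↥(zpowers z)) x₁).ncard := zorbit_card_ge hp hzord hx₁m
          have hc2 : p ≤ (orbit (↥(zpowers z)) x₂).ncard := zorbit_card_ge hp hzord hx₂m
          have h4 : (orbit (↥(zpowers z)) x₁ ∪ orbit (↥(zpowers z)) x₂).ncard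
              = (orbit (↥(zpowers z)) x₁).ncard + (orbit (↥(zpowers z)) x₂).ncard :=
            Set.ncard_union_eq hd (Set.toFinite _) (Set.toFinite _)
          have h5 := Set.ncard_le_ncard (Set.subset_univ
            (orbit (↥(zpowers z)) x₁ ∪ orbit (↥(zpowers z)) x₂)) (Set.toFinite _)
          rw [Set.ncard_univ, hcardGH] at h5
          omega
        have hub : (orbit (↥(zpowers z)) x₁).ncard ≤ p := by
          have hdvd : (orbit (↥(zpowers z)) x₁).ncard ∣ p ^ v := hzord ▸ zorbit_card_dvd z x₁
          obtain ⟨i, _, hi⟩ := (Nat.dvd_prime_pow hp).mp hdvd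
          have hlen : (orbit (↥(zpowers z)) x₁).ncard ≤ n := by
            have h5 := Set.ncard_le_ncard (Set.subset_univ
              (orbit (↥(zpowers z)) x₁)) (Set.toFinite _)
            rwa [Set.ncard_univ, hcardGH] at h5
          rcases Nat.lt_or_ge i 2 with hi2 | hi2
          · interval_cases i
            · rw [hi, pow_zero]; omega
            · rw [hi, pow_one]
          · exfalso
            have : p ^ 2 ≤ p ^ i := Nat.pow_le_pow_right (by omega) hi2
            have hp2' : 2 * p ≤ p ^ 2 := by nlinarith
            omega
        exact le_trans (Set.ncard_le_ncard hsub (Set.toFinite _)) hub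
    have h6 := Set.ncard_add_ncard_compl Cq (Set.toFinite _) (Set.toFinite _)
    rw [hcardGH] at h6
    omega
  -- A as preimage
  have hApre : Aset = QuotientGroup.mk ⁻¹' Oᶜ := by
    ext u
    rw [hAset]
    simp only [Set.mem_setOf_eq, Set.mem_preimage, Set.mem_compl_iff]
    exact not_congr (mem_orbit_one_iff H K u).symm
  have hOc : Oᶜ.ncard = n - p := by
    have h6 := Set.ncard_add_ncard_compl O (Set.toFinite _) (Set.toFinite _)
    rw [hcardGK, hOcard] at h6
    omega
  -- cardinalities
  have hpre_card : ∀ (L : Subgroup G) (T : Set (G ⧸ L)),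
      (QuotientGroup.mk ⁻¹' T : Set G).ncard = Nat.card ↥L * T.ncard := by
    intro L T
    rw [← Nat.card_coe_set_eq, ← Nat.card_coe_set_eq,
      Nat.card_congr (QuotientGroup.preimageMkEquivSubgroupProdSet L T), Nat.card_prod]
  have hCcard : Cset.ncard = Nat.card ↥H * Cq.ncard := by
    rw [hCpre]; exact hpre_card H Cq
  have hAcard : Aset.ncard = Nat.card ↥K * (n - p) := by
    rw [hApre, hpre_card K Oᶜ, hOc]
  have hHKcard : Nat.card ↥H = Nat.card ↥K := by
    have c1 := Subgroup.card_mul_index H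
    have c2 := Subgroup.card_mul_index K
    rw [hH] at c1; rw [hK] at c2
    have := c1.trans c2.symm
    exact Nat.eq_of_mul_eq_mul_right (Nat.pos_of_ne_zero hn0) this
  have hHpos : 0 < Nat.card ↥H := Nat.card_pos
  -- A nonempty
  have hAne : Aset.Nonempty := by
    rw [← Set.ncard_pos (Set.toFinite _), hAcard]
    exact Nat.mul_pos (hHKcard ▸ hHpos) (by omega)
  obtain ⟨a₀, ha₀⟩ := hAne
  -- injection C → A
  have hinj : Function.Injective (fun u : G => u * a₀) := fun x y h => by
    simpa using mul_right_cancel (h : x * a₀ = y * a₀)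
  have himg : (fun u : G => u * a₀) '' Cset ⊆ Aset := by
    rintro w ⟨c, hc, rfl⟩
    exact claimC c hc a₀ ha₀
  have himgcard : ((fun u : G => u * a₀) '' Cset).ncard = Cset.ncard :=
    Set.ncard_image_of_injective Cset hinj
  have hCleA : Cset.ncard ≤ Aset.ncard := by
    rw [← himgcard]
    exact Set.ncard_le_ncard himg (Set.toFinite _)
  -- |Cq| = n - p and image = A
  have hCqeq : Cq.ncard = n - p := by
    have h7 : Nat.card ↥H * Cq.ncard ≤ Nat.card ↥H * (n - p) := by
      rw [← hCcard]
      calc Cset.ncard ≤ Aset.ncard := hCleA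
        _ = Nat.card ↥H * (n - p) := by rw [hAcard, hHKcard]
    have h8 := Nat.le_of_mul_le_mul_left h7 hHpos
    omega
  have hCAeq : Cset.ncard = Aset.ncard := by
    rw [hCcard, hAcard, hCqeq, hHKcard]
  have himg_eq : (fun u : G => u * a₀) '' Cset = Aset :=
    Set.eq_of_subset_of_ncard_le himg (by rw [himgcard, hCAeq]) (Set.toFinite _)
  -- C is closed under multiplication
  have hmulC : ∀ c₁ ∈ Cset, ∀ c₂ ∈ Cset, c₁ * c₂ ∈ Cset := by
    intro c₁ hc₁ c₂ hc₂
    have h1 : c₂ * a₀ ∈ Aset := claimC c₂ hc₂ a₀ ha₀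
    have h2 : c₁ * (c₂ * a₀) ∈ Aset := claimC c₁ hc₁ _ h1
    rw [← himg_eq] at h2
    obtain ⟨c₃, hc₃, he⟩ := h2
    have he' : c₃ * a₀ = c₁ * (c₂ * a₀) := he
    have he'' : c₃ = c₁ * c₂ := mul_right_cancel (by rw [he']; group : c₃ * a₀ = c₁ * c₂ * a₀)
    rwa [← he'']
  have h1C : (1 : G) ∈ Cset := by
    rw [hCset]
    simp only [Set.mem_setOf_eq]
    simpa using hzH
  -- powers stay in C
  have hpowC : ∀ c ∈ Cset, ∀ k : ℕ, 1 ≤ k → c ^ k ∈ Cset := by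
    intro c hc k hk
    induction k with
    | zero => omega
    | succ k ih =>
        rcases Nat.eq_zero_or_pos k with h0 | h0
        · subst h0; simpa using hc
        · rw [pow_succ]
          exact hmulC _ (ih h0) _ hc
  have hinvC : ∀ c ∈ Cset, c⁻¹ ∈ Cset := by
    intro c hc
    have hord : 0 < orderOf c := orderOf_pos c
    rcases Nat.eq_or_lt_of_le hord with h1 | h1
    · have : c = 1 := orderOf_eq_one_iff.mp h1.symm
      rw [this]; simpa using h1C
    · have h2 : c ^ (orderOf c - 1) ∈ Cset := hpowC c hc _ (by omega)
      have h3 : c ^ (orderOf c - 1) = c⁻¹ := by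
        have h4 : c ^ (orderOf c - 1) * c = 1 := by
          have h5 : orderOf c - 1 + 1 = orderOf c := by omega
          rw [← pow_succ, h5]
          exact pow_orderOf_eq_one c
        exact eq_inv_of_mul_eq_one_left h4
      rwa [h3] at h2
  -- C is a subgroup
  set C' : Subgroup G := {
    carrier := Cset
    one_mem' := h1C
    mul_mem' := fun {x y} hx hy => hmulC x hx y hy
    inv_mem' := fun {x} hx => hinvC x hx } with hC'
  have hCC : Nat.card ↥C' = Nat.card ↥H * (n - p) := by
    have e1 : Nat.card ↥C' = Nat.card ↥Cset := rfl
    rw [e1, Nat.card_coe_set_eq, hCcard, hCqeq]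
  have hfinal := Subgroup.card_mul_index C'
  have hGcard : Nat.card G = Nat.card ↥H * n := by
    have := Subgroup.card_mul_index H
    rw [hH] at this; omega
  rw [hCC, hGcard] at hfinal
  -- (n - p) * C'.index = n
  have hnp_dvd : (n - p) ∣ n := by
    have h8 : Nat.card ↥H * ((n - p) * C'.index) = Nat.card ↥H * n := by
      rw [← hfinal]; ring
    have h9 : (n - p) * C'.index = n := Nat.eq_of_mul_eq_mul_left hHpos h8
    exact ⟨C'.index, h9.symm⟩
  have hnp_dvd_p : (n - p) ∣ p := by
    have h10 : (n - p) ∣ (n - (n - p)) := Nat.dvd_sub hnp_dvd dvd_rfl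
    have h11 : n - (n - p) = p := by omega
    rwa [h11] at h10
  have := hp.eq_one_or_self_of_dvd (n - p) hnp_dvd_p
  omega

theorem not_indexRealizable_n_n_np (n p : ℕ) (hp : p.Prime) (h₁ : p + 1 < n) (h₂ : n < 2 * p) :
    ¬ IndexRealizable n n (n * p) := by
  rintro ⟨G, _, H, K, hHfin, hKfin, hH, hK, hHK⟩
  have hp2 : 2 ≤ p := hp.two_le
  haveI : (H ⊓ K).FiniteIndex :=
    ⟨by rw [hHK]; exact Nat.mul_ne_zero (by omega) (by omega)⟩
  set R := (H ⊓ K).normalCore with hR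
  haveI : R.Normal := Subgroup.normalCore_normal _
  haveI hRfi : R.FiniteIndex := Subgroup.finiteIndex_normalCore _
  haveI : Finite (G ⧸ R) := by
    apply Nat.finite_of_card_ne_zero
    exact hRfi.index_ne_zero
  set f := QuotientGroup.mk' R with hf
  have hsurj : Function.Surjective f := QuotientGroup.mk'_surjective R
  have hker : f.ker = R := QuotientGroup.ker_mk' R
  have hRHK : R ≤ H ⊓ K := Subgroup.normalCore_le _
  have hRH : R ≤ H := hRHK.trans inf_le_left
  have hRK : R ≤ K := hRHK.trans inf_le_right
  have hkerH : f.ker ≤ H := by rw [hker]; exact hRH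
  have hkerK : f.ker ≤ K := by rw [hker]; exact hRK
  have hkerHK : f.ker ≤ H ⊓ K := by rw [hker]; exact hRHK
  have hidxH : (H.map f).index = n := by
    rw [H.index_map_eq hsurj hkerH]; exact hH
  have hidxK : (K.map f).index = n := by
    rw [K.index_map_eq hsurj hkerK]; exact hK
  have hinf : H.map f ⊓ K.map f = (H ⊓ K).map f := by
    apply le_antisymm
    · rintro x ⟨hx1, hx2⟩
      obtain ⟨h, hh, rfl⟩ := hx1
      obtain ⟨k, hk, hkx⟩ := hx2
      have hker' : h⁻¹ * k ∈ f.ker := by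
        rw [MonoidHom.mem_ker, map_mul, map_inv, hkx]
        simp
      rw [hker] at hker'
      have hhk : h⁻¹ * k ∈ K := hRK hker'
      have hhK : h ∈ K := by
        have : k * (h⁻¹ * k)⁻¹ = h := by group
        rw [← this]
        exact K.mul_mem hk (K.inv_mem hhk)
      exact ⟨h, ⟨hh, hhK⟩, rfl⟩
    · exact le_inf (Subgroup.map_mono inf_le_left) (Subgroup.map_mono inf_le_right)
  have hidxHK : (H.map f ⊓ K.map f).index = n * p := by
    rw [hinf, (H ⊓ K).index_map_eq hsurj hkerHK]; exact hHK
  exact finite_case hp h₁ h₂ hidxH hidxK hidxHK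
end

section
/- Let q be a prime power and let n > d ≥ 1 be positive integers, and let N denote the number of d-dimensional subspaces of the vector space F_q^n (which equals the q-binomial coefficient (n choose d)_q). Then the triple (N, N, q^{d(n-d)}·N) is index-realizable. -/
open Pointwise Module

section Aux

variable {F V : Type} [Field F] [AddCommGroup V] [Module F V]

lemma smul_submodule_eq_map (e : V ≃ₗ[F] V) (W : Submodule F V) :
    e • W = W.map (e : V →ₗ[F] V) := by
  rfl

lemma map_isCompl (e : V ≃ₗ[F] V) {W U : Submodule F V} (h : IsCompl W U) :
    IsCompl (W.map (e : V →ₗ[F] V)) (U.map (e : V →ₗ[F] V)) :=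
  (Submodule.orderIsoMapComap e).isCompl h

lemma exists_linearEquiv_pair [FiniteDimensional F V]
    {W U W' U' : Submodule F V} (h : IsCompl W U) (h' : IsCompl W' U')
    (hWW' : finrank F W = finrank F W') :
    ∃ e : V ≃ₗ[F] V, W.map (e : V →ₗ[F] V) = W' ∧ U.map (e : V →ₗ[F] V) = U' := by
  have hUU' : finrank F U = finrank F U' := by
    have h1 := Submodule.finrank_add_eq_of_isCompl h
    have h2 := Submodule.finrank_add_eq_of_isCompl h'
    omega
  let e₁ : W ≃ₗ[F] W' := LinearEquiv.ofFinrankEq _ _ hWW'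
  let e₂ : U ≃ₗ[F] U' := LinearEquiv.ofFinrankEq _ _ hUU'
  let e : V ≃ₗ[F] V := (Submodule.prodEquivOfIsCompl W U h).symm ≪≫ₗ (e₁.prodCongr e₂) ≪≫ₗ
    Submodule.prodEquivOfIsCompl W' U' h'
  have he : ∀ x : W, e x = e₁ x := by
    intro x
    simp [e, Submodule.prodEquivOfIsCompl_symm_apply_left, Submodule.coe_prodEquivOfIsCompl',
      LinearEquiv.prodCongr_apply]
  have he' : ∀ x : U, e x = e₂ x := by
    intro x
    simp [e, Submodule.prodEquivOfIsCompl_symm_apply_right, Submodule.coe_prodEquivOfIsCompl',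
      LinearEquiv.prodCongr_apply]
  have key : ∀ (A B : Submodule F V) (f : A ≃ₗ[F] B), (∀ x : A, e x = f x) →
      A.map (e : V →ₗ[F] V) = B := by
    intro A B f hf
    apply le_antisymm
    · rintro x ⟨a, ha, rfl⟩
      rw [LinearEquiv.coe_coe, hf ⟨a, ha⟩]
      exact (f ⟨a, ha⟩).2
    · intro b hb
      obtain ⟨a, ha⟩ := f.surjective ⟨b, hb⟩
      exact ⟨a, a.2, by rw [LinearEquiv.coe_coe, hf a, ha]⟩
  exact ⟨e, key W W' e₁ he, key U U' e₂ he'⟩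

lemma card_isCompl [Fintype F] [FiniteDimensional F V] (W : Submodule F V) :
    Nat.card {U : Submodule F V // IsCompl W U} =
      Fintype.card F ^ ((finrank F V - finrank F W) * finrank F W) := by
  classical
  obtain ⟨U₀, hU₀⟩ := Submodule.exists_isCompl W
  have hdim : finrank F U₀ = finrank F V - finrank F W := by
    have := Submodule.finrank_add_eq_of_isCompl hU₀
    omega
  let E : {f : V →ₗ[F] W // ∀ x : W, f x = x} ≃ (U₀ →ₗ[F] W) :=
    { toFun := fun f => f.1 ∘ₗ U₀.subtype
      invFun := fun φ => ⟨LinearMap.ofIsCompl hU₀ LinearMap.id φ, fun x => by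
        simpa using LinearMap.ofIsCompl_left_apply hU₀ x⟩
      left_inv := fun f => Subtype.ext <| LinearMap.ofIsCompl_eq hU₀
        (fun u => (f.2 u).symm) (fun u => rfl)
      right_inv := fun φ => by ext u; simp }
  rw [Nat.card_congr ((W.isComplEquivProj).trans E)]
  let b := Module.finBasis F U₀
  rw [Nat.card_congr (b.constr (S := F) (M' := W)).toEquiv.symm]
  have : Nat.card W = Fintype.card F ^ finrank F W := by
    haveI : Finite V := Module.finite_of_finite F
    haveI : Fintype V := Fintype.ofFinite V
    haveI : Fintype W := Fintype.ofFinite W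
    rw [Nat.card_eq_fintype_card, card_eq_pow_finrank (K := F) (V := W)]
  rw [Nat.card_fun, this, Nat.card_eq_fintype_card, Fintype.card_fin, hdim, ← pow_mul,
    Nat.mul_comm]

end Aux

theorem indexRealizable_grassmannian (q n d : ℕ) (hq : IsPrimePow q) (hd : 1 ≤ d) (hdn : d < n)
    (F : Type) [Field F] [Fintype F] (hF : Fintype.card F = q) (N : ℕ)
    (hN : N = Nat.card {W : Submodule F (Fin n → F) // Module.finrank F W = d}) :
    IndexRealizable N N (q ^ (d * (n - d)) * N) := by
  classical
  set V : Type := Fin n → F with hVdef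
  haveI : Finite (V ≃ₗ[F] V) :=
    Finite.of_injective (fun e => (e : V → V)) DFunLike.coe_injective
  haveI : Finite (Submodule F V) :=
    Finite.of_injective (fun W => (W : Set V)) SetLike.coe_injective
  have hfV : finrank F V = n := Module.finrank_fin_fun F
  -- a d-dimensional subspace W₀
  obtain ⟨f, hf⟩ := exists_linearIndependent_of_le_finrank (R := F) (M := V) (n := d)
    (by omega)
  set W₀ : Submodule F V := Submodule.span F (Set.range f) with hW₀def
  have hW₀dim : finrank F W₀ = d := by
    rw [hW₀def, finrank_span_eq_card hf, Fintype.card_fin]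
  obtain ⟨U₀, hU₀compl⟩ := Submodule.exists_isCompl W₀
  have hU₀dim : finrank F U₀ = n - d := by
    have := Submodule.finrank_add_eq_of_isCompl hU₀compl
    omega
  -- dimension facts about complements
  have hcomplrk : ∀ {W U : Submodule F V}, IsCompl W U → finrank F W = d →
      finrank F U = n - d := by
    intro W U h hW
    have := Submodule.finrank_add_eq_of_isCompl h
    omega
  have hcomplrk' : ∀ {W U : Submodule F V}, IsCompl W U → finrank F U = n - d →
      finrank F W = d := by
    intro W U h hU
    have := Submodule.finrank_add_eq_of_isCompl h
    omega
  set G := V ≃ₗ[F] V with hGdef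
  refine ⟨G, inferInstance, MulAction.stabilizer G W₀, MulAction.stabilizer G U₀,
    Subgroup.index_ne_zero_of_finite, Subgroup.index_ne_zero_of_finite, ?_, ?_, ?_⟩
  · -- first index
    have horb1 : MulAction.orbit G W₀ = {W : Submodule F V | finrank F W = d} := by
      ext W
      constructor
      · rintro ⟨e, rfl⟩
        show finrank F ((e : V ≃ₗ[F] V) • W₀ : Submodule F V) = d
        rw [smul_submodule_eq_map, LinearEquiv.finrank_map_eq]
        exact hW₀dim
      · intro hW
        obtain ⟨U, hU⟩ := Submodule.exists_isCompl W
        obtain ⟨e, h1, _⟩ := exists_linearEquiv_pair hU₀compl hU (by rw [hW₀dim]; exact hW.symm)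
        exact ⟨e, show (e : V ≃ₗ[F] V) • W₀ = W by rw [smul_submodule_eq_map, h1]⟩
    rw [MulAction.index_stabilizer, horb1, ← Nat.card_coe_set_eq]
    exact hN.symm
  · -- second index
    have horb2 : MulAction.orbit G U₀ = {U : Submodule F V | finrank F U = n - d} := by
      ext U
      constructor
      · rintro ⟨e, rfl⟩
        show finrank F ((e : V ≃ₗ[F] V) • U₀ : Submodule F V) = n - d
        rw [smul_submodule_eq_map, LinearEquiv.finrank_map_eq]
        exact hU₀dim
      · intro hU
        obtain ⟨W, hW⟩ := Submodule.exists_isCompl U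
        obtain ⟨e, _, h2⟩ := exists_linearEquiv_pair hU₀compl hW.symm
          (by rw [hW₀dim]; exact (hcomplrk' hW.symm hU).symm)
        exact ⟨e, show (e : V ≃ₗ[F] V) • U₀ = U by rw [smul_submodule_eq_map, h2]⟩
    rw [MulAction.index_stabilizer, horb2, ← Nat.card_coe_set_eq]
    -- now need: Nat.card {U // finrank F U = n - d} = N, via double counting
    have Ecompl : ∀ (W : Submodule F V), finrank F W = d →
        Nat.card {U : Submodule F V // IsCompl W U} = q ^ ((n - d) * d) := by
      intro W hW
      rw [card_isCompl W, hW, hfV, hF]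
    have Ecompl' : ∀ (U : Submodule F V), finrank F U = n - d →
        Nat.card {W : Submodule F V // IsCompl U W} = q ^ (d * (n - d)) := by
      intro U hU
      rw [card_isCompl U, hU, hfV, hF, Nat.sub_sub_self (le_of_lt hdn)]
    -- the pair type
    set P := {p : Submodule F V × Submodule F V // finrank F p.1 = d ∧ IsCompl p.1 p.2} with hP
    have E1 : P ≃ Σ W : {W : Submodule F V // finrank F W = d},
        {U : Submodule F V // IsCompl W.1 U} :=
      { toFun := fun p => ⟨⟨p.1.1, p.2.1⟩, ⟨p.1.2, p.2.2⟩⟩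
        invFun := fun s => ⟨(s.1.1, s.2.1), s.1.2, s.2.2⟩
        left_inv := fun p => rfl
        right_inv := fun s => rfl }
    have E2 : P ≃ Σ U : {U : Submodule F V // finrank F U = n - d},
        {W : Submodule F V // IsCompl U.1 W} :=
      { toFun := fun p => ⟨⟨p.1.2, hcomplrk p.2.2 p.2.1⟩, ⟨p.1.1, p.2.2.symm⟩⟩
        invFun := fun s => ⟨(s.2.1, s.1.1), hcomplrk' s.2.2.symm s.1.2, s.2.2.symm⟩
        left_inv := fun p => rfl
        right_inv := fun s => rfl }
    have c1 : Nat.card P = N * q ^ ((n - d) * d) := by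
      have Ffib : ∀ W : {W : Submodule F V // finrank F W = d},
          {U : Submodule F V // IsCompl W.1 U} ≃ Fin (q ^ ((n - d) * d)) := fun W =>
        (Finite.equivFin _).trans (finCongr (Ecompl W.1 W.2))
      have hQ : Nat.card (Fin (q ^ ((n - d) * d))) = q ^ ((n - d) * d) :=
        Nat.card_eq_fintype_card.trans (Fintype.card_fin _)
      rw [Nat.card_congr (E1.trans (Equiv.sigmaEquivProdOfEquiv Ffib)), Nat.card_prod, hQ, hN]
    have c2 : Nat.card P = Nat.card {U : Submodule F V // finrank F U = n - d}
        * q ^ (d * (n - d)) := by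
      have Ffib : ∀ U : {U : Submodule F V // finrank F U = n - d},
          {W : Submodule F V // IsCompl U.1 W} ≃ Fin (q ^ (d * (n - d))) := fun U =>
        (Finite.equivFin _).trans (finCongr (Ecompl' U.1 U.2))
      have hQ : Nat.card (Fin (q ^ (d * (n - d)))) = q ^ (d * (n - d)) :=
        Nat.card_eq_fintype_card.trans (Fintype.card_fin _)
      rw [Nat.card_congr (E2.trans (Equiv.sigmaEquivProdOfEquiv Ffib)), Nat.card_prod, hQ]
    have hqpos : q ^ (d * (n - d)) ≠ 0 := pow_ne_zero _ hq.pos.ne'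
    have : Nat.card {U : Submodule F V // finrank F U = n - d} * q ^ (d * (n - d))
        = N * q ^ (d * (n - d)) := by
      rw [← c2, c1, Nat.mul_comm (n - d) d]
    exact Nat.eq_of_mul_eq_mul_right (Nat.pos_of_ne_zero hqpos) this
  · -- intersection index
    have stab_pair : MulAction.stabilizer G (W₀, U₀)
        = MulAction.stabilizer G W₀ ⊓ MulAction.stabilizer G U₀ := by
      ext e
      simp [MulAction.mem_stabilizer_iff, Prod.ext_iff]
    have horb2 : MulAction.orbit G (W₀, U₀) =
        {p : Submodule F V × Submodule F V | finrank F p.1 = d ∧ IsCompl p.1 p.2} := by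
      ext p
      constructor
      · rintro ⟨e, rfl⟩
        constructor
        · show finrank F ((e : V ≃ₗ[F] V) • W₀ : Submodule F V) = d
          rw [smul_submodule_eq_map, LinearEquiv.finrank_map_eq]
          exact hW₀dim
        · show IsCompl ((e : V ≃ₗ[F] V) • W₀ : Submodule F V) ((e : V ≃ₗ[F] V) • U₀)
          rw [smul_submodule_eq_map, smul_submodule_eq_map]
          exact map_isCompl e hU₀compl
      · rintro ⟨h1, h2⟩
        obtain ⟨e, he1, he2⟩ := exists_linearEquiv_pair hU₀compl h2 (by rw [hW₀dim]; exact h1.symm)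
        refine ⟨e, Prod.ext ?_ ?_⟩
        · show (e : V ≃ₗ[F] V) • W₀ = p.1
          rw [smul_submodule_eq_map, he1]
        · show (e : V ≃ₗ[F] V) • U₀ = p.2
          rw [smul_submodule_eq_map, he2]
    rw [← stab_pair, MulAction.index_stabilizer, horb2, ← Nat.card_coe_set_eq]
    -- card of pair set
    have Ecompl : ∀ (W : Submodule F V), finrank F W = d →
        Nat.card {U : Submodule F V // IsCompl W U} = q ^ ((n - d) * d) := by
      intro W hW
      rw [card_isCompl W, hW, hfV, hF]
    have E1 : {p : Submodule F V × Submodule F V | finrank F p.1 = d ∧ IsCompl p.1 p.2} ≃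
        Σ W : {W : Submodule F V // finrank F W = d}, {U : Submodule F V // IsCompl W.1 U} :=
      { toFun := fun p => ⟨⟨p.1.1, p.2.1⟩, ⟨p.1.2, p.2.2⟩⟩
        invFun := fun s => ⟨(s.1.1, s.2.1), s.1.2, s.2.2⟩
        left_inv := fun p => rfl
        right_inv := fun s => rfl }
    have Ffib : ∀ W : {W : Submodule F V // finrank F W = d},
        {U : Submodule F V // IsCompl W.1 U} ≃ Fin (q ^ ((n - d) * d)) := fun W =>
      (Finite.equivFin _).trans (finCongr (Ecompl W.1 W.2))
    have hQ : Nat.card (Fin (q ^ ((n - d) * d))) = q ^ ((n - d) * d) :=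
      Nat.card_eq_fintype_card.trans (Fintype.card_fin _)
    rw [Nat.card_congr (E1.trans (Equiv.sigmaEquivProdOfEquiv Ffib)), Nat.card_prod, hQ, hN,
      Nat.mul_comm (n - d) d, Nat.mul_comm]
end

section
/- The triple (10, 10, 30) is index-realizable; in fact, it is realized by G = S₅ with H the setwise stabilizer of {1, 2} and K the setwise stabilizer of {3, 4}, i.e., [S₅ : H] = 10, [S₅ : K] = 10, and [S₅ : H ∩ K] = 30. -/
open Pointwise

abbrev G5 := Equiv.Perm (Fin 5)
abbrev Hf : Subgroup G5 := MulAction.stabilizer G5 ({0,1} : Finset (Fin 5))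
abbrev Kf : Subgroup G5 := MulAction.stabilizer G5 ({2,3} : Finset (Fin 5))

instance : DecidablePred (· ∈ Hf) := fun _ => decEq _ _
instance : DecidablePred (· ∈ Kf) := fun _ => decEq _ _
instance : DecidablePred (· ∈ Hf ⊓ Kf) :=
  fun g => decidable_of_iff (g ∈ Hf ∧ g ∈ Kf) Subgroup.mem_inf.symm

lemma cardG5 : Nat.card G5 = 120 := by rw [Nat.card_eq_fintype_card]; decide

lemma cardHf : Nat.card Hf = 12 := by rw [Nat.card_eq_fintype_card]; decide

lemma cardKf : Nat.card Kf = 12 := by rw [Nat.card_eq_fintype_card]; decide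

lemma cardHKf : Nat.card (Hf ⊓ Kf : Subgroup G5) = 4 := by
  rw [Nat.card_eq_fintype_card]; decide

lemma indexHf : Hf.index = 10 := by
  have h := Subgroup.card_mul_index Hf
  rw [cardHf, cardG5] at h; omega

lemma indexKf : Kf.index = 10 := by
  have h := Subgroup.card_mul_index Kf
  rw [cardKf, cardG5] at h; omega

lemma indexHKf : (Hf ⊓ Kf).index = 30 := by
  have h := Subgroup.card_mul_index (Hf ⊓ Kf)
  rw [cardHKf, cardG5] at h; omega

lemma setH : MulAction.stabilizer G5 ({0, 1} : Set (Fin 5)) = Hf := by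
  rw [show ({0, 1} : Set (Fin 5)) = (({0, 1} : Finset (Fin 5)) : Set (Fin 5)) by norm_num,
    MulAction.stabilizer_coe_finset]

lemma setK : MulAction.stabilizer G5 ({2, 3} : Set (Fin 5)) = Kf := by
  rw [show ({2, 3} : Set (Fin 5)) = (({2, 3} : Finset (Fin 5)) : Set (Fin 5)) by norm_num,
    MulAction.stabilizer_coe_finset]

theorem indexRealizable_10_10_30 :
    IndexRealizable 10 10 30 ∧
    (MulAction.stabilizer (Equiv.Perm (Fin 5)) ({0, 1} : Set (Fin 5))).index = 10 ∧
    (MulAction.stabilizer (Equiv.Perm (Fin 5)) ({2, 3} : Set (Fin 5))).index = 10 ∧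
    (MulAction.stabilizer (Equiv.Perm (Fin 5)) ({0, 1} : Set (Fin 5)) ⊓
      MulAction.stabilizer (Equiv.Perm (Fin 5)) ({2, 3} : Set (Fin 5))).index = 30 := by
  refine ⟨⟨G5, inferInstance, Hf, Kf, ?_, ?_, indexHf, indexKf, indexHKf⟩, ?_, ?_, ?_⟩
  · rw [indexHf]; norm_num
  · rw [indexKf]; norm_num
  · rw [setH]; exact indexHf
  · rw [setK]; exact indexKf
  · rw [setH, setK]; exact indexHKf
end

section
/- For every positive integer e, the triple (7, 7e, 28e) is index-realizable. -/
set_option maxRecDepth 40000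

/-- `SL(3, F₂) = GL(3, F₂) = PSL(2,7)`, the simple group of order 168. -/
abbrev IR.SL3 := Matrix.SpecialLinearGroup (Fin 3) (ZMod 2)

namespace IR

def vv : Fin 3 → ZMod 2 := ![1,0,0]

/-- Stabilizer of the point `vv` of the Fano plane. -/
def Hsub : Subgroup SL3 where
  carrier := {A | A.1.mulVec vv = vv}
  mul_mem' := by
    intro a b ha hb
    simp only [Set.mem_setOf_eq] at *
    rw [Matrix.SpecialLinearGroup.coe_mul, ← Matrix.mulVec_mulVec, hb, ha]
  one_mem' := by simp [Matrix.one_mulVec]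
  inv_mem' := by
    intro a ha
    simp only [Set.mem_setOf_eq] at *
    conv_lhs => rw [← ha]
    rw [Matrix.mulVec_mulVec, ← Matrix.SpecialLinearGroup.coe_mul, inv_mul_cancel]
    simp [Matrix.one_mulVec]

/-- Stabilizer of a line of the Fano plane not containing `vv`. -/
def Ksub : Subgroup SL3 where
  carrier := {A | Matrix.vecMul vv A.1 = vv}
  mul_mem' := by
    intro a b ha hb
    simp only [Set.mem_setOf_eq] at *
    rw [Matrix.SpecialLinearGroup.coe_mul, ← Matrix.vecMul_vecMul, ha, hb]
  one_mem' := by simp [Matrix.vecMul_one]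
  inv_mem' := by
    intro a ha
    simp only [Set.mem_setOf_eq] at *
    conv_lhs => rw [← ha]
    rw [Matrix.vecMul_vecMul, ← Matrix.SpecialLinearGroup.coe_mul, mul_inv_cancel]
    simp [Matrix.vecMul_one]

instance : DecidablePred (· ∈ Hsub) := fun A => decidable_of_iff (A.1.mulVec vv = vv) Iff.rfl
instance : DecidablePred (· ∈ Ksub) := fun A => decidable_of_iff (Matrix.vecMul vv A.1 = vv) Iff.rfl
instance : DecidablePred (· ∈ Hsub ⊓ Ksub) :=
  fun A => decidable_of_iff (A ∈ Hsub ∧ A ∈ Ksub) Subgroup.mem_inf.symm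

lemma cardG : Nat.card SL3 = 168 := by
  rw [Nat.card_eq_fintype_card]; decide
lemma cardH : Nat.card Hsub = 24 := by
  rw [Nat.card_eq_fintype_card]; decide
lemma cardK : Nat.card Ksub = 24 := by
  rw [Nat.card_eq_fintype_card]; decide
lemma cardHK : Nat.card (Hsub ⊓ Ksub : Subgroup SL3) = 6 := by
  rw [Nat.card_eq_fintype_card]; decide

lemma indexH : Hsub.index = 7 := by
  have := Subgroup.index_mul_card (H := Hsub)
  rw [cardG, cardH] at this; omega
lemma indexK : Ksub.index = 7 := by
  have := Subgroup.index_mul_card (H := Ksub)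
  rw [cardG, cardK] at this; omega
lemma indexHK : (Hsub ⊓ Ksub).index = 28 := by
  have := Subgroup.index_mul_card (H := Hsub ⊓ Ksub)
  rw [cardG, cardHK] at this; omega

lemma prod_inf_prod {G G' : Type*} [Group G] [Group G'] (H₁ H₂ : Subgroup G)
    (K₁ K₂ : Subgroup G') :
    H₁.prod K₁ ⊓ H₂.prod K₂ = (H₁ ⊓ H₂).prod (K₁ ⊓ K₂) := by
  ext x
  simp only [Subgroup.mem_inf, Subgroup.mem_prod]
  tauto

end IR

theorem indexRealizable_7_7e_28e (e : ℕ) (he : 0 < e) :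
    IndexRealizable 7 (7 * e) (28 * e) := by
  haveI : NeZero e := ⟨he.ne'⟩
  have hcard : Fintype.card (Multiplicative (ZMod e)) = e :=
    (Fintype.card_multiplicative (ZMod e)).trans (ZMod.card e)
  refine ⟨IR.SL3 × Multiplicative (ZMod e), inferInstance,
    IR.Hsub.prod ⊤, IR.Ksub.prod ⊥, ?_, ?_, ?_, ?_, ?_⟩
  · rw [Subgroup.index_prod, IR.indexH, Subgroup.index_top]; omega
  · rw [Subgroup.index_prod, IR.indexK, Subgroup.index_bot, Nat.card_eq_fintype_card]
    omega
  · rw [Subgroup.index_prod, IR.indexH, Subgroup.index_top]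
  · rw [Subgroup.index_prod, IR.indexK, Subgroup.index_bot, Nat.card_eq_fintype_card]
    omega
  · rw [IR.prod_inf_prod, Subgroup.index_prod, IR.indexHK, top_inf_eq, Subgroup.index_bot,
      Nat.card_eq_fintype_card]
    omega
end
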